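/- arXiv:2603.29201 — 3 statements merged into one kernel-verified Lean document; each statement's English description precedes it below -/
import Mathlib

section
/- Let V: ℝ → ℝ be smooth and let E ∈ ℝ satisfy E − V(t) > 0 for all t ∈ [0, 1]. Then there exist τ > 0 and a twice continuously differentiable map q: ℝ → ℝ², not identically zero on [0, τ], such that q(0) = q(τ) = 0 and q''(t) = −(E − V(t/τ))·q(t) for all t ∈ [0, τ]. Equivalently, the Hamiltonian H(t,q,p) = ‖p‖²/2 + (E − V(t/τ))·‖q‖²/2 on ℝ² × ℝ² admits a nontrivial Hamiltonian chord starting and ending on the Lagrangian submanifold {0} × ℝ². -/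
/- STATEMENT 3: For V : ℝ → ℝ smooth and E with E − V > 0 on [0,1], there exist
τ > 0 and a C² curve q : ℝ → ℝ², not identically zero on [0, τ], with
q(0) = q(τ) = 0 and q'' = −(E − V(t/τ))·q on [0, τ]; i.e. the Hamiltonian
‖p‖²/2 + (E − V(t/τ))‖q‖²/2 admits a nontrivial chord on the Lagrangian {0} × ℝ². -/

namespace HamChord

open Set Real Filter



noncomputable def cl (u : ℝ) : ℝ := max 0 (min u 1)

lemma cl_mem (u : ℝ) : cl u ∈ Icc (0:ℝ) 1 := by
  constructor
  · exact le_max_left _ _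
  · rcases le_total u 1 with h | h
    · simp [cl, min_eq_left h, h]
    · simp [cl, min_eq_right h]

lemma cl_eq {u : ℝ} (hu : u ∈ Icc (0:ℝ) 1) : cl u = u := by
  simp [cl, min_eq_left hu.2, max_eq_right hu.1]

lemma cl_lip (u v : ℝ) : |cl u - cl v| ≤ |u - v| := by
  have h1 : |min u 1 - min v 1| ≤ |u - v| := by
    rcases abs_cases (u - v) with ⟨he, _⟩ | ⟨he, _⟩ <;> rw [he] <;>
      rcases le_total u 1 with h1 | h1 <;> rcases le_total v 1 with h2 | h2 <;>
      simp only [min_eq_left, min_eq_right, h1, h2, abs_le] <;> constructor <;> linarith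
  calc |cl u - cl v| ≤ |min u 1 - min v 1| := by
        rw [show cl u = max (min u 1) 0 by rw [max_comm]; rfl,
            show cl v = max (min v 1) 0 by rw [max_comm]; rfl]
        exact abs_max_sub_max_le_abs (min u 1) (min v 1) 0
    _ ≤ |u - v| := h1

lemma cl_continuous : Continuous cl := by
  unfold cl; fun_prop

/-- the first-order vector field for f'' = -W f -/
def vf (W : ℝ → ℝ) (t : ℝ) (p : ℝ × ℝ) : ℝ × ℝ := (p.2, -W t * p.1)

lemma vf_lip {W : ℝ → ℝ} {M : ℝ} (hM1 : 1 ≤ M) (hWM : ∀ t, |W t| ≤ M) (t : ℝ) :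
    LipschitzWith M.toNNReal (vf W t) := by
  apply LipschitzWith.of_dist_le_mul
  intro p q
  have hM0 : (0:ℝ) ≤ M := le_trans zero_le_one hM1
  rw [Prod.dist_eq, Prod.dist_eq]
  have hc : (M.toNNReal : ℝ) = M := Real.coe_toNNReal _ hM0
  rw [hc]
  simp only [vf, Real.dist_eq]
  have h1 : |p.2 - q.2| ≤ M * max |p.1 - q.1| |p.2 - q.2| := by
    calc |p.2 - q.2| ≤ max |p.1 - q.1| |p.2 - q.2| := le_max_right _ _
      _ ≤ M * max |p.1 - q.1| |p.2 - q.2| := by nlinarith [abs_nonneg (p.1 - q.1), abs_nonneg (p.2 - q.2), le_max_left |p.1 - q.1| |p.2 - q.2|]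
  have h2 : |(-W t * p.1) - (-W t * q.1)| ≤ M * max |p.1 - q.1| |p.2 - q.2| := by
    have : (-W t * p.1) - (-W t * q.1) = (-W t) * (p.1 - q.1) := by ring
    rw [this, abs_mul, abs_neg]
    calc |W t| * |p.1 - q.1| ≤ M * |p.1 - q.1| :=
          mul_le_mul_of_nonneg_right (hWM t) (abs_nonneg _)
      _ ≤ M * max |p.1 - q.1| |p.2 - q.2| :=
          mul_le_mul_of_nonneg_left (le_max_left _ _) hM0
  exact max_le h1 h2

lemma vf_norm_le {W : ℝ → ℝ} {M : ℝ} (hM1 : 1 ≤ M) (hWM : ∀ t, |W t| ≤ M) (t : ℝ) (x : ℝ × ℝ) :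
    ‖vf W t x‖ ≤ M * ‖x‖ := by
  have hM0 : (0:ℝ) ≤ M := le_trans zero_le_one hM1
  rw [Prod.norm_def]
  simp only [vf, Real.norm_eq_abs]
  have hx : ‖x‖ = max |x.1| |x.2| := by rw [Prod.norm_def]; simp [Real.norm_eq_abs]
  rw [hx]
  apply max_le
  · calc |x.2| ≤ max |x.1| |x.2| := le_max_right _ _
      _ ≤ M * max |x.1| |x.2| := by nlinarith [abs_nonneg x.1, abs_nonneg x.2, le_max_left |x.1| |x.2|]
  · rw [abs_mul, abs_neg]
    calc |W t| * |x.1| ≤ M * |x.1| := mul_le_mul_of_nonneg_right (hWM t) (abs_nonneg _)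
      _ ≤ M * max |x.1| |x.2| := mul_le_mul_of_nonneg_left (le_max_left _ _) hM0

/-- local Picard-Lindelöf step -/
lemma pl_step {W : ℝ → ℝ} {M : ℝ} (hW : Continuous W) (hM1 : 1 ≤ M)
    (hWM : ∀ t, |W t| ≤ M) (t₀ : ℝ) (x₀ : ℝ × ℝ) :
    ∃ Y : ℝ → ℝ × ℝ, Y t₀ = x₀ ∧ ∀ t ∈ Icc t₀ (t₀ + 1/(2*M)),
      HasDerivWithinAt Y (vf W t (Y t)) (Icc t₀ (t₀ + 1/(2*M))) t := by
  have hM0 : (0:ℝ) < M := lt_of_lt_of_le zero_lt_one hM1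
  have ht0 : t₀ ∈ Icc t₀ (t₀ + 1/(2*M)) := by
    have : (0:ℝ) < 1/(2*M) := by positivity
    exact left_mem_Icc.2 (by linarith)
  have hc : (M.toNNReal : ℝ) = M := Real.coe_toNNReal _ hM0.le
  have hpl : IsPicardLindelof (vf W) (tmin := t₀) (tmax := t₀ + 1/(2*M)) ⟨t₀, ht0⟩ x₀
      (‖x₀‖₊ + 1) 0 (M.toNNReal * (2*‖x₀‖₊ + 1)) M.toNNReal := by
    constructor
    · exact fun t _ => (vf_lip hM1 hWM t).lipschitzOnWith
    · intro x _
      have : Continuous fun t => vf W t x := by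
        simp only [vf]; fun_prop
      exact this.continuousOn
    · intro t _ x hx
      have hxn : ‖x‖ ≤ 2*‖x₀‖ + 1 := by
        have := mem_closedBall_iff_norm.1 hx
        push_cast at this
        nlinarith [norm_nonneg x₀, norm_sub_norm_le x x₀, this]
      push_cast
      rw [hc]
      calc ‖vf W t x‖ ≤ M * ‖x‖ := vf_norm_le hM1 hWM t x
        _ ≤ M * (2*‖x₀‖ + 1) := mul_le_mul_of_nonneg_left hxn (le_of_lt hM0)
    · have hmax : max (t₀ + 1/(2*M) - t₀) (t₀ - t₀) = 1/(2*M) := by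
        have : (0:ℝ) < 1/(2*M) := by positivity
        rw [max_eq_left (by linarith)]; ring
      show ((M.toNNReal * (2*‖x₀‖₊ + 1) : NNReal) : ℝ) * max (t₀ + 1/(2*M) - t₀) (t₀ - t₀)
        ≤ ((‖x₀‖₊ + 1 : NNReal) : ℝ) - ((0:NNReal) : ℝ)
      rw [hmax]
      push_cast
      rw [hc]
      have h2M : (0:ℝ) < 2*M := by nlinarith
      rw [mul_one_div, div_le_iff₀ h2M]
      nlinarith [norm_nonneg x₀]
  obtain ⟨Y, hY0, hY⟩ := hpl.exists_eq_forall_mem_Icc_hasDerivWithinAt₀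
  exact ⟨Y, hY0, hY⟩




section S2
variable {W : ℝ → ℝ} {M : ℝ}

lemma glue_step {T : ℝ} (hT : 0 ≤ T)
    {X : ℝ → ℝ × ℝ} (hX0 : X 0 = ((0:ℝ),(1:ℝ)))
    (hX : ∀ t ∈ Icc 0 T, HasDerivWithinAt X (vf W t (X t)) (Icc 0 T) t)
    {Y : ℝ → ℝ × ℝ} {ε : ℝ} (hε : 0 < ε) (hYT : Y T = X T)
    (hY : ∀ t ∈ Icc T (T+ε), HasDerivWithinAt Y (vf W t (Y t)) (Icc T (T+ε)) t) :
    ∃ Z : ℝ → ℝ × ℝ, Z 0 = ((0:ℝ),(1:ℝ)) ∧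
      ∀ t ∈ Icc 0 (T+ε), HasDerivWithinAt Z (vf W t (Z t)) (Icc 0 (T+ε)) t := by
  classical
  set Z : ℝ → ℝ × ℝ := fun t => if t ≤ T then X t else Y t with hZdef
  have hZX : ∀ t, t ≤ T → Z t = X t := fun t ht => by simp [hZdef, ht]
  have hZY : ∀ t, T ≤ t → Z t = Y t := by
    intro t ht
    rcases eq_or_lt_of_le ht with h | h
    · simp [hZdef, ← h, hYT]
    · simp [hZdef, not_le.2 h]
  have hunion : Icc (0:ℝ) T ∪ Icc T (T+ε) = Icc 0 (T+ε) :=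
    Icc_union_Icc_eq_Icc hT (by linarith)
  refine ⟨Z, by rw [hZX 0 hT, hX0], ?_⟩
  intro t ht
  rcases lt_trichotomy t T with hlt | heq | hgt
  · -- t < T
    rw [hZX t (le_of_lt hlt), ← hasDerivWithinAt_inter (Iic_mem_nhds hlt)]
    have h1 : HasDerivWithinAt X (vf W t (X t)) (Icc 0 (T+ε) ∩ Iic T) t :=
      (hX t ⟨ht.1, le_of_lt hlt⟩).mono (fun s hs => ⟨hs.1.1, hs.2⟩)
    exact h1.congr (fun s hs => hZX s hs.2) (hZX t (le_of_lt hlt))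
  · -- t = T
    subst heq
    rw [hZX t le_rfl]
    have hl : HasDerivWithinAt Z (vf W t (X t)) (Icc 0 t) t :=
      (hX t ⟨ht.1, le_rfl⟩).congr (fun s hs => hZX s hs.2) (hZX t le_rfl)
    have hr : HasDerivWithinAt Z (vf W t (X t)) (Icc t (t+ε)) t := by
      have := hY t ⟨le_rfl, by linarith⟩
      rw [hYT] at this
      exact this.congr (fun s hs => hZY s hs.1) (hZY t le_rfl)
    have := hl.union hr
    rwa [hunion] at this
  · -- t > T
    rw [hZY t (le_of_lt hgt), ← hasDerivWithinAt_inter (Ioi_mem_nhds hgt)]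
    have h1 : HasDerivWithinAt Y (vf W t (Y t)) (Icc 0 (T+ε) ∩ Ioi T) t :=
      (hY t ⟨le_of_lt hgt, ht.2⟩).mono (fun s hs => ⟨le_of_lt hs.2, hs.1.2⟩)
    exact h1.congr (fun s hs => hZY s (le_of_lt hs.2)) (hZY t (le_of_lt hgt))

end S2


lemma exists_sol {W : ℝ → ℝ} {M : ℝ} (hW : Continuous W) (hM1 : 1 ≤ M)
    (hWM : ∀ t, |W t| ≤ M) (L : ℝ) :
    ∃ X : ℝ → ℝ × ℝ, X 0 = ((0:ℝ),(1:ℝ)) ∧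
      ∀ t ∈ Icc 0 L, HasDerivWithinAt X (vf W t (X t)) (Icc 0 L) t := by
  have hM0 : (0:ℝ) < M := lt_of_lt_of_le zero_lt_one hM1
  have hε : (0:ℝ) < 1/(2*M) := by positivity
  have key : ∀ n : ℕ, ∃ X : ℝ → ℝ × ℝ, X 0 = ((0:ℝ),(1:ℝ)) ∧
      ∀ t ∈ Icc 0 ((n+1) * (1/(2*M))), HasDerivWithinAt X (vf W t (X t))
        (Icc 0 ((n+1) * (1/(2*M)))) t := by
    intro n
    induction n with
    | zero =>
      obtain ⟨Y, hY0, hY⟩ := pl_step hW hM1 hWM 0 ((0:ℝ),(1:ℝ))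
      refine ⟨Y, hY0, ?_⟩
      have h0 : ((0:ℕ)+1 : ℝ) * (1/(2*M)) = 0 + 1/(2*M) := by push_cast; ring
      rw [h0]
      exact hY
    | succ n ih =>
      obtain ⟨X, hX0, hX⟩ := ih
      have hT : 0 ≤ ((n:ℝ)+1) * (1/(2*M)) := by positivity
      obtain ⟨Y, hYT, hY⟩ := pl_step hW hM1 hWM (((n:ℝ)+1) * (1/(2*M)))
        (X (((n:ℝ)+1) * (1/(2*M))))
      obtain ⟨Z, hZ0, hZ⟩ := glue_step hT hX0 hX hε hYT hY
      refine ⟨Z, hZ0, ?_⟩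
      have h1 : ((n:ℕ)+1+1 : ℝ) * (1/(2*M)) = ((n:ℝ)+1) * (1/(2*M)) + 1/(2*M) := by
        push_cast; ring
      rw [show ((n+1:ℕ)+1 : ℝ) * (1/(2*M)) = ((n:ℕ)+1+1 : ℝ) * (1/(2*M)) by push_cast; ring, h1]
      exact hZ
  obtain ⟨n, hn⟩ := exists_nat_ge (L * (2*M))
  obtain ⟨X, hX0, hX⟩ := key n
  have hLn : L ≤ ((n:ℝ)+1) * (1/(2*M)) := by
    calc L = L * (2*M) * (1/(2*M)) := by field_simp
      _ ≤ (n:ℝ) * (1/(2*M)) := mul_le_mul_of_nonneg_right hn (le_of_lt hε)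
      _ ≤ ((n:ℝ)+1) * (1/(2*M)) := by nlinarith
  refine ⟨X, hX0, fun t ht => (hX t ⟨ht.1, le_trans ht.2 hLn⟩).mono
    (Icc_subset_Icc le_rfl hLn)⟩


/-- component extraction -/
lemma hd_fst {X : ℝ → ℝ × ℝ} {p : ℝ × ℝ} {s : Set ℝ} {t : ℝ}
    (h : HasDerivWithinAt X p s t) : HasDerivWithinAt (fun u => (X u).1) p.1 s t :=
  (ContinuousLinearMap.fst ℝ ℝ ℝ).hasFDerivAt.comp_hasDerivWithinAt t h

lemma hd_fstA {X : ℝ → ℝ × ℝ} {p : ℝ × ℝ} {t : ℝ}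
    (h : HasDerivAt X p t) : HasDerivAt (fun u => (X u).1) p.1 t :=
  (ContinuousLinearMap.fst ℝ ℝ ℝ).hasFDerivAt.comp_hasDerivAt t h

lemma hd_sndA {X : ℝ → ℝ × ℝ} {p : ℝ × ℝ} {t : ℝ}
    (h : HasDerivAt X p t) : HasDerivAt (fun u => (X u).2) p.2 t :=
  (ContinuousLinearMap.snd ℝ ℝ ℝ).hasFDerivAt.comp_hasDerivAt t h

lemma hd_snd {X : ℝ → ℝ × ℝ} {p : ℝ × ℝ} {s : Set ℝ} {t : ℝ}
    (h : HasDerivWithinAt X p s t) : HasDerivWithinAt (fun u => (X u).2) p.2 s t :=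
  (ContinuousLinearMap.snd ℝ ℝ ℝ).hasFDerivAt.comp_hasDerivWithinAt t h

theorem solution_package {W : ℝ → ℝ} {M : ℝ} (hW : Continuous W) (hM1 : 1 ≤ M)
    (hWM : ∀ t, |W t| ≤ M) {L : ℝ} (hL : 0 < L) :
    ∃ F G : ℝ → ℝ, ContDiff ℝ 2 F ∧ F 0 = 0 ∧ G 0 = 1 ∧
      (∀ t, HasDerivAt F (G t) t) ∧
      (∀ t ∈ Icc 0 L, HasDerivAt G (-W t * F t) t) ∧
      (∀ t ∈ Icc 0 L, |F t| ≤ exp (M*L) ∧ |G t| ≤ exp (M*L)) := by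
  classical
  have hM0 : (0:ℝ) < M := lt_of_lt_of_le zero_lt_one hM1
  obtain ⟨X, hX0, hX⟩ := exists_sol hW hM1 hWM L
  have hXc : ContinuousOn X (Icc 0 L) := fun t ht => (hX t ht).continuousWithinAt
  set clp : ℝ → ℝ := fun t => max 0 (min t L) with hclp
  have hclpc : Continuous clp := by fun_prop
  have hclpm : ∀ t, clp t ∈ Icc (0:ℝ) L := by
    intro t
    refine ⟨le_max_left _ _, ?_⟩
    rcases le_total t L with h | h
    · simp [hclp, min_eq_left h, h, hL.le]
    · simp [hclp, min_eq_right h, hL.le]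
  have hclpe : ∀ t ∈ Icc (0:ℝ) L, clp t = t := fun t ht => by
    simp [hclp, min_eq_left ht.2, max_eq_right ht.1]
  set p : ℝ → ℝ × ℝ := fun t => X (clp t) with hp
  have hpc : Continuous p := hXc.comp_continuous hclpc hclpm
  have hpe : ∀ t ∈ Icc (0:ℝ) L, p t = X t := fun t ht => by rw [hp]; simp [hclpe t ht]
  set A := (X L).1
  set B₀ := (X L).2
  set C₀ := -W L * (X L).1 with hC₀
  set Tay : ℝ → ℝ := fun s => A + (B₀*(s-L) + C₀/2*(s-L)^2) with hTay
  set Tay' : ℝ → ℝ := fun s => B₀ + C₀*(s-L) with hTay'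
  set F : ℝ → ℝ := fun t => if t ≤ 0 then t else if t ≤ L then (p t).1 else Tay t with hF
  set G : ℝ → ℝ := fun t => if t ≤ 0 then 1 else if t ≤ L then (p t).2 else Tay' t with hG
  set H : ℝ → ℝ := fun t => if t ≤ 0 then 0 else if t ≤ L then -W t * (p t).1 else C₀ with hH
  have hXL : p L = X L := hpe L ⟨hL.le, le_rfl⟩
  -- pointwise identification on [0, L]
  have hFeq : ∀ t ∈ Icc (0:ℝ) L, F t = (X t).1 := by
    intro t ht
    rcases eq_or_lt_of_le ht.1 with h0 | h0
    · rw [hF]; simp [← h0, hX0]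
    · rw [hF]; simp [not_le.2 h0, ht.2, hpe t ht]
  have hGeq : ∀ t ∈ Icc (0:ℝ) L, G t = (X t).2 := by
    intro t ht
    rcases eq_or_lt_of_le ht.1 with h0 | h0
    · rw [hG]; simp [← h0, hX0]
    · rw [hG]; simp [not_le.2 h0, ht.2, hpe t ht]
  have hHeq : ∀ t ∈ Icc (0:ℝ) L, H t = -W t * (X t).1 := by
    intro t ht
    rcases eq_or_lt_of_le ht.1 with h0 | h0
    · rw [hH]; simp [← h0, hX0]
    · rw [hH]; simp [not_le.2 h0, ht.2, hpe t ht]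
  -- Taylor derivative facts
  have hTayd : ∀ t, HasDerivAt Tay (Tay' t) t := by
    intro t
    rw [hTay, hTay']
    have h1 : HasDerivAt (fun s : ℝ => s - L) 1 t := (hasDerivAt_id t).sub_const L
    have h2 : HasDerivAt (fun s : ℝ => B₀*(s-L)) B₀ t := by
      simpa using h1.const_mul B₀
    have h3 : HasDerivAt (fun s : ℝ => (s-L)^2) (2*(t-L)) t := by
      simpa using h1.fun_pow 2
    have h4 : HasDerivAt (fun s : ℝ => C₀/2*(s-L)^2) (C₀*(t-L)) t := by
      have := h3.const_mul (C₀/2)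
      exact this.congr_deriv (by ring)
    exact (h2.add h4).const_add A
  have hTayd' : ∀ t, HasDerivAt Tay' C₀ t := by
    intro t
    rw [hTay']
    have h1 : HasDerivAt (fun s : ℝ => s - L) 1 t := (hasDerivAt_id t).sub_const L
    have h2 : HasDerivAt (fun s : ℝ => C₀*(s-L)) C₀ t := by simpa using h1.const_mul C₀
    simpa using h2.const_add B₀
  -- continuity of H
  have hHc : Continuous H := by
    rw [hH]
    have hc1 : Continuous fun t : ℝ => -W t * (p t).1 := by fun_prop
    have hinner : Continuous fun t : ℝ => if t ≤ L then -W t * (p t).1 else C₀ := by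
      apply Continuous.if_le hc1 continuous_const continuous_id continuous_const
      intro x hx
      simp only [id_eq] at hx
      subst hx
      simp only [hXL, hC₀]
    apply Continuous.if_le continuous_const hinner continuous_id continuous_const
    intro x hx
    simp only [id_eq] at hx
    subst hx
    simp [hL.le, hpe 0 ⟨le_rfl, hL.le⟩, hX0]
  -- derivative of F is G, everywhere
  have hFd : ∀ t, HasDerivAt F (G t) t := by
    intro t
    rcases lt_trichotomy t 0 with h0 | h0 | h0
    · have hev : F =ᶠ[nhds t] id := by
        filter_upwards [Iio_mem_nhds h0] with s hs
        rw [hF]; simp [le_of_lt (mem_Iio.1 hs)]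
      have : G t = 1 := by rw [hG]; simp [le_of_lt h0]
      rw [this]
      exact (hasDerivAt_id t).congr_of_eventuallyEq hev
    · subst h0
      have hleft : HasDerivWithinAt F 1 (Iic 0) 0 := by
        have : HasDerivWithinAt (id : ℝ → ℝ) 1 (Iic 0) 0 := (hasDerivAt_id 0).hasDerivWithinAt
        exact this.congr (fun s hs => by rw [hF]; simp [mem_Iic.1 hs]) (by rw [hF]; simp)
      have hright : HasDerivWithinAt F 1 (Icc 0 L) 0 := by
        have h1 : HasDerivWithinAt (fun u => (X u).1) ((X 0).2) (Icc 0 L) 0 := by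
          have := hd_snd (hX 0 ⟨le_rfl, hL.le⟩)
          have h2 := hd_fst (hX 0 ⟨le_rfl, hL.le⟩)
          simpa [vf] using h2
        have h1' : HasDerivWithinAt (fun u => (X u).1) 1 (Icc 0 L) 0 := by
          rwa [hX0] at h1
        exact h1'.congr (fun s hs => hFeq s hs) (hFeq 0 ⟨le_rfl, hL.le⟩)
      have hmem : Iic 0 ∪ Icc 0 L ∈ nhds (0:ℝ) := by
        apply Filter.mem_of_superset (Iic_mem_nhds hL)
        intro s hs
        rcases le_total s 0 with h | h
        · exact Or.inl h
        · exact Or.inr ⟨h, hs⟩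
      have : G 0 = 1 := by rw [hG]; simp
      rw [this]
      exact (hleft.union hright).hasDerivAt hmem
    · rcases lt_trichotomy t L with hL1 | hL1 | hL1
      · have hev : F =ᶠ[nhds t] (fun u => (X u).1) := by
          filter_upwards [Ioo_mem_nhds h0 hL1] with s hs
          rw [hFeq s ⟨(mem_Ioo.1 hs).1.le, (mem_Ioo.1 hs).2.le⟩]
        have hder : HasDerivAt (fun u => (X u).1) ((X t).2) t := by
          have h2 := hd_fstA ((hX t ⟨h0.le, hL1.le⟩).hasDerivAt (Icc_mem_nhds h0 hL1))
          simpa [vf] using h2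
        have : G t = (X t).2 := hGeq t ⟨h0.le, hL1.le⟩
        rw [this]
        exact hder.congr_of_eventuallyEq hev
      · subst hL1
        have hleft : HasDerivWithinAt F ((X t).2) (Icc 0 t) t := by
          have h1 := hd_fst (hX t ⟨h0.le, le_rfl⟩)
          simp only [vf] at h1
          exact h1.congr (fun s hs => hFeq s hs) (hFeq t ⟨h0.le, le_rfl⟩)
        have hright : HasDerivWithinAt F ((X t).2) (Ici t) t := by
          have h1 : HasDerivWithinAt Tay ((X t).2) (Ici t) t := by
            have := (hTayd t).hasDerivWithinAt (s := Ici t)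
            simpa only [hTay', sub_self, mul_zero, add_zero] using this
          refine h1.congr (fun s hs => ?_) ?_
          · rcases eq_or_lt_of_le (mem_Ici.1 hs) with h | h
            · rw [hF]; simp only [hTay]
              simp [not_le.2 h0, ← h, hXL]; rfl
            · rw [hF]; simp [not_le.2 (lt_trans h0 h), not_le.2 h]
          · rw [hF]; simp only [hTay]
            simp [not_le.2 h0, hXL]; rfl
        have hmem : Icc 0 t ∪ Ici t ∈ nhds t := by
          apply Filter.mem_of_superset (Ioi_mem_nhds h0)
          intro s hs
          rcases le_total s t with h | h
          · exact Or.inl ⟨le_of_lt hs, h⟩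
          · exact Or.inr h
        have hGL : G t = (X t).2 := hGeq t ⟨h0.le, le_rfl⟩
        rw [hGL]
        exact (hleft.union hright).hasDerivAt hmem
      · have hev : F =ᶠ[nhds t] Tay := by
          filter_upwards [Ioi_mem_nhds hL1] with s hs
          rw [hF]; simp [not_le.2 (lt_trans hL (mem_Ioi.1 hs)), not_le.2 (mem_Ioi.1 hs)]
        have : G t = Tay' t := by rw [hG]; simp [not_le.2 (lt_trans hL hL1), not_le.2 hL1]
        rw [this]
        exact (hTayd t).congr_of_eventuallyEq hev
  -- derivative of G is H, everywhere
  have hGd : ∀ t, HasDerivAt G (H t) t := by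
    intro t
    rcases lt_trichotomy t 0 with h0 | h0 | h0
    · have hev : G =ᶠ[nhds t] (fun _ => 1) := by
        filter_upwards [Iio_mem_nhds h0] with s hs
        rw [hG]; simp [le_of_lt (mem_Iio.1 hs)]
      have : H t = 0 := by rw [hH]; simp [le_of_lt h0]
      rw [this]
      exact (hasDerivAt_const t (1:ℝ)).congr_of_eventuallyEq hev
    · subst h0
      have hleft : HasDerivWithinAt G 0 (Iic 0) 0 := by
        have : HasDerivWithinAt (fun _ : ℝ => (1:ℝ)) 0 (Iic 0) 0 :=
          (hasDerivAt_const 0 (1:ℝ)).hasDerivWithinAt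
        exact this.congr (fun s hs => by rw [hG]; simp [mem_Iic.1 hs]) (by rw [hG]; simp)
      have hright : HasDerivWithinAt G 0 (Icc 0 L) 0 := by
        have h1 := hd_snd (hX 0 ⟨le_rfl, hL.le⟩)
        simp only [vf] at h1
        have h1' : HasDerivWithinAt (fun u => (X u).2) 0 (Icc 0 L) 0 := by
          have : -W 0 * (X 0).1 = 0 := by rw [hX0]; simp
          rwa [this] at h1
        exact h1'.congr (fun s hs => hGeq s hs) (hGeq 0 ⟨le_rfl, hL.le⟩)
      have hmem : Iic 0 ∪ Icc 0 L ∈ nhds (0:ℝ) := by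
        apply Filter.mem_of_superset (Iic_mem_nhds hL)
        intro s hs
        rcases le_total s 0 with h | h
        · exact Or.inl h
        · exact Or.inr ⟨h, hs⟩
      have : H 0 = 0 := by rw [hH]; simp
      rw [this]
      exact (hleft.union hright).hasDerivAt hmem
    · rcases lt_trichotomy t L with hL1 | hL1 | hL1
      · have hev : G =ᶠ[nhds t] (fun u => (X u).2) := by
          filter_upwards [Ioo_mem_nhds h0 hL1] with s hs
          rw [hGeq s ⟨(mem_Ioo.1 hs).1.le, (mem_Ioo.1 hs).2.le⟩]
        have hder : HasDerivAt (fun u => (X u).2) (-W t * (X t).1) t := by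
          have h2 := hd_sndA ((hX t ⟨h0.le, hL1.le⟩).hasDerivAt (Icc_mem_nhds h0 hL1))
          simpa [vf] using h2
        have : H t = -W t * (X t).1 := hHeq t ⟨h0.le, hL1.le⟩
        rw [this]
        exact hder.congr_of_eventuallyEq hev
      · subst hL1
        have hleft : HasDerivWithinAt G C₀ (Icc 0 t) t := by
          have h1 := hd_snd (hX t ⟨h0.le, le_rfl⟩)
          simp only [vf] at h1
          exact h1.congr (fun s hs => hGeq s hs) (hGeq t ⟨h0.le, le_rfl⟩)
        have hright : HasDerivWithinAt G C₀ (Ici t) t := by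
          have h1 : HasDerivWithinAt Tay' C₀ (Ici t) t := (hTayd' t).hasDerivWithinAt
          refine h1.congr (fun s hs => ?_) ?_
          · rcases eq_or_lt_of_le (mem_Ici.1 hs) with h | h
            · rw [hG]; simp only [hTay']
              simp [not_le.2 h0, ← h, hXL]; rfl
            · rw [hG]; simp [not_le.2 (lt_trans h0 h), not_le.2 h]
          · rw [hG]; simp only [hTay']
            simp [not_le.2 h0, hXL]; rfl
        have hmem : Icc 0 t ∪ Ici t ∈ nhds t := by
          apply Filter.mem_of_superset (Ioi_mem_nhds h0)
          intro s hs
          rcases le_total s t with h | h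
          · exact Or.inl ⟨le_of_lt hs, h⟩
          · exact Or.inr h
        have hHL : H t = C₀ := by
          rw [hH]; simp only [hXL]
          simp only [not_le.2 h0, le_rfl, if_true, if_false, hXL, hC₀]
        rw [hHL]
        exact (hleft.union hright).hasDerivAt hmem
      · have hev : G =ᶠ[nhds t] Tay' := by
          filter_upwards [Ioi_mem_nhds hL1] with s hs
          rw [hG]; simp [not_le.2 (lt_trans hL (mem_Ioi.1 hs)), not_le.2 (mem_Ioi.1 hs)]
        have : H t = C₀ := by rw [hH]; simp [not_le.2 (lt_trans hL hL1), not_le.2 hL1]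
        rw [this]
        exact (hTayd' t).congr_of_eventuallyEq hev
  -- smoothness
  have hdF : deriv F = G := funext fun t => (hFd t).deriv
  have hdG : deriv G = H := funext fun t => (hGd t).deriv
  have hcd : ContDiff ℝ 2 F := by
    have h2 : (2 : WithTop ℕ∞) = 1 + 1 := by norm_num
    rw [h2]
    refine contDiff_succ_iff_deriv.2 ⟨fun t => (hFd t).differentiableAt, by simp, ?_⟩
    rw [hdF]
    exact contDiff_one_iff_deriv.2 ⟨fun t => (hGd t).differentiableAt, by rw [hdG]; exact hHc⟩
  -- a priori bound
  have hXb : ∀ t ∈ Icc 0 L, ‖X t‖ ≤ exp (M*L) := by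
    have hder0 : ∀ t ∈ Ico 0 L, HasDerivWithinAt X (vf W t (X t)) (Ici t) t := fun t ht =>
      (hX t ⟨ht.1, ht.2.le⟩).mono_of_mem_nhdsWithin (Icc_mem_nhdsGE_of_mem ht)
    have hzero : ∀ t ∈ Ico 0 L, HasDerivWithinAt (fun _ : ℝ => ((0:ℝ),(0:ℝ)))
        (vf W t ((0:ℝ),(0:ℝ))) (Ici t) t := by
      intro t ht
      have : vf W t ((0:ℝ),(0:ℝ)) = ((0:ℝ),(0:ℝ)) := by simp [vf]
      rw [this]
      exact (hasDerivAt_const t _).hasDerivWithinAt.congr_deriv (by simp [Prod.ext_iff])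
    have hd0 : dist (X 0) ((0:ℝ),(0:ℝ)) ≤ 1 := by
      rw [hX0, Prod.dist_eq]
      simp [Real.dist_eq]
    have := dist_le_of_trajectories_ODE (v := vf W) (vf_lip hM1 hWM) hXc hder0
      (continuousOn_const) hzero hd0
    intro t ht
    have h1 := this t ht
    have h2 : dist (X t) ((0:ℝ),(0:ℝ)) = ‖X t‖ := by
      rw [show ((0:ℝ),(0:ℝ)) = (0 : ℝ × ℝ) from rfl, dist_zero_right]
    rw [h2] at h1
    calc ‖X t‖ ≤ 1 * exp ((M.toNNReal : ℝ) * (t - 0)) := h1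
      _ = exp (M * t) := by rw [one_mul, Real.coe_toNNReal M hM0.le, sub_zero]
      _ ≤ exp (M * L) := by
        apply exp_le_exp.2
        exact mul_le_mul_of_nonneg_left ht.2 hM0.le
  refine ⟨F, G, hcd, by rw [hF]; simp, by rw [hG]; simp, hFd, ?_, ?_⟩
  · intro t ht
    have := hGd t
    rwa [hHeq t ht, ← hFeq t ht] at this
  · intro t ht
    constructor
    · rw [hFeq t ht, ← Real.norm_eq_abs]
      exact le_trans (norm_fst_le (X t)) (hXb t ht)
    · rw [hGeq t ht, ← Real.norm_eq_abs]
      exact le_trans (norm_snd_le (X t)) (hXb t ht)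

section Lemmas
variable {W : ℝ → ℝ} {M L B : ℝ} {F G : ℝ → ℝ}

/-- uniqueness: if F and G vanish simultaneously inside, F ≡ 0 on [0,L]. -/
lemma kill (hM1 : 1 ≤ M) (hWM : ∀ t, |W t| ≤ M)
    (hFd : ∀ t, HasDerivAt F (G t) t)
    (hGd : ∀ t ∈ Icc 0 L, HasDerivAt G (-W t * F t) t)
    {s : ℝ} (hs : s ∈ Ioo 0 L) (hFs : F s = 0) (hGs : G s = 0) :
    ∀ t ∈ Icc 0 L, F t = 0 := by
  set P : ℝ → ℝ × ℝ := fun t => (F t, G t) with hP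
  have hvlip : ∀ t, LipschitzOnWith M.toNNReal (vf W t) (univ : Set (ℝ × ℝ)) :=
    fun t => (vf_lip hM1 hWM t).lipschitzOnWith
  have hPc : ContinuousOn P (Icc 0 L) := by
    intro t ht
    exact (((hFd t).continuousAt.prodMk ((hGd t ht).continuousAt)).continuousWithinAt)
  have hPd : ∀ t ∈ Ioo 0 L, HasDerivAt P (vf W t (P t)) t := by
    intro t ht
    have := (hFd t).prodMk (hGd t ⟨ht.1.le, ht.2.le⟩)
    simpa [vf, hP] using this
  have hZc : ContinuousOn (fun _ : ℝ => ((0:ℝ),(0:ℝ))) (Icc 0 L) := continuousOn_const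
  have hZd : ∀ t ∈ Ioo 0 L, HasDerivAt (fun _ : ℝ => ((0:ℝ),(0:ℝ)))
      (vf W t ((0:ℝ),(0:ℝ))) t := by
    intro t ht
    have : vf W t ((0:ℝ),(0:ℝ)) = ((0:ℝ),(0:ℝ)) := by simp [vf]
    rw [this]
    exact hasDerivAt_const t _
  have heq : P s = ((0:ℝ),(0:ℝ)) := by rw [hP]; simp [hFs, hGs]
  have := ODE_solution_unique_of_mem_Icc (s := fun _ => (univ : Set (ℝ × ℝ))) (fun t _ => hvlip t) hs hPc hPd
    (fun _ _ => mem_univ _) hZc hZd (fun _ _ => mem_univ _) heq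
  intro t ht
  have ht' := this ht
  have : (P t).1 = ((0:ℝ),(0:ℝ)).1 := by rw [ht']
  simpa [hP] using this

/-- Gronwall continuous dependence on the potential. -/
lemma dep {W₂ : ℝ → ℝ} {F₂ G₂ : ℝ → ℝ} {η : ℝ}
    (hM1 : 1 ≤ M) (hWM : ∀ t, |W t| ≤ M)
    (hF0 : F 0 = 0) (hG0 : G 0 = 1) (hF20 : F₂ 0 = 0) (hG20 : G₂ 0 = 1)
    (hFd : ∀ t, HasDerivAt F (G t) t)
    (hGd : ∀ t ∈ Icc 0 L, HasDerivAt G (-W t * F t) t)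
    (hF2d : ∀ t, HasDerivAt F₂ (G₂ t) t)
    (hG2d : ∀ t ∈ Icc 0 L, HasDerivAt G₂ (-W₂ t * F₂ t) t)
    (hη : 0 ≤ η) (hB : 0 ≤ B)
    (hWd : ∀ t ∈ Icc 0 L, |W t - W₂ t| ≤ η)
    (hF2b : ∀ t ∈ Icc 0 L, |F₂ t| ≤ B) :
    ∀ t ∈ Icc 0 L, |F t - F₂ t| ≤ η * B * exp (M * L) := by
  rcases le_or_gt L 0 with hL0 | hL0
  · intro t ht
    have h0t : t = 0 := le_antisymm (ht.2.trans hL0) ht.1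
    subst h0t
    rw [hF0, hF20]
    simp
    positivity
  have hM0 : (0:ℝ) < M := lt_of_lt_of_le zero_lt_one hM1
  set P : ℝ → ℝ × ℝ := fun t => (F t, G t) with hP
  set Q : ℝ → ℝ × ℝ := fun t => (F₂ t, G₂ t) with hQ
  have hPc : ContinuousOn P (Icc 0 L) := fun t ht =>
    (((hFd t).continuousAt.prodMk ((hGd t ht).continuousAt)).continuousWithinAt)
  have hQc : ContinuousOn Q (Icc 0 L) := fun t ht =>
    (((hF2d t).continuousAt.prodMk ((hG2d t ht).continuousAt)).continuousWithinAt)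
  have hPd : ∀ t ∈ Ico 0 L, HasDerivWithinAt P (vf W t (P t)) (Ici t) t := by
    intro t ht
    have := ((hFd t).prodMk (hGd t ⟨ht.1, ht.2.le⟩)).hasDerivWithinAt (s := Ici t)
    simpa [vf, hP] using this
  have hQd : ∀ t ∈ Ico 0 L, HasDerivWithinAt Q (vf W₂ t (Q t)) (Ici t) t := by
    intro t ht
    have := ((hF2d t).prodMk (hG2d t ⟨ht.1, ht.2.le⟩)).hasDerivWithinAt (s := Ici t)
    simpa [vf, hQ] using this
  have hPbound : ∀ t ∈ Ico 0 L, dist (vf W t (P t)) (vf W t (P t)) ≤ 0 := by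
    intro t _; rw [dist_self]
  have hQbound : ∀ t ∈ Ico 0 L, dist (vf W₂ t (Q t)) (vf W t (Q t)) ≤ η * B := by
    intro t ht
    rw [Prod.dist_eq]
    simp only [vf, Real.dist_eq]
    have h1 : |G₂ t - G₂ t| = 0 := by simp
    apply max_le
    · rw [h1]; positivity
    · have : -W₂ t * (Q t).1 - -W t * (Q t).1 = (W t - W₂ t) * F₂ t := by
        rw [hQ]; ring
      rw [this, abs_mul]
      exact mul_le_mul (hWd t ⟨ht.1, ht.2.le⟩) (hF2b t ⟨ht.1, ht.2.le⟩) (abs_nonneg _) hη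
  have ha : dist (P 0) (Q 0) ≤ 0 := by
    rw [hP, hQ]
    simp [hF0, hF20, hG0, hG20]
  have hgron := dist_le_of_approx_trajectories_ODE (vf_lip hM1 hWM) hPc hPd hPbound
    hQc hQd hQbound ha
  intro t ht
  have h1 := hgron t ht
  have hMne : ((M.toNNReal : ℝ)) = M := Real.coe_toNNReal M hM0.le
  rw [hMne, zero_add, gronwallBound_of_K_ne_0 (ne_of_gt hM0)] at h1
  have h2 : |F t - F₂ t| ≤ dist (P t) (Q t) := by
    rw [Prod.dist_eq]
    refine le_trans ?_ (le_max_left _ _)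
    rw [hP, hQ, Real.dist_eq]
  have h3 : (0:ℝ) * exp (M * (t-0)) + η*B/M * (exp (M * (t-0)) - 1) ≤ η * B * exp (M*L) := by
    rw [zero_mul, zero_add, sub_zero]
    have he1 : exp (M*t) - 1 ≤ exp (M*L) := by
      have := exp_le_exp.2 (mul_le_mul_of_nonneg_left ht.2 hM0.le)
      nlinarith [exp_pos (M*t)]
    have hd1 : η*B/M ≤ η*B := by
      rw [div_le_iff₀ hM0]
      nlinarith [mul_nonneg hη hB]
    have h0 : (0:ℝ) ≤ exp (M*t) - 1 := by
      have : (1:ℝ) ≤ exp (M*t) := by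
        rw [← exp_zero]
        exact exp_le_exp.2 (mul_nonneg hM0.le ht.1)
      linarith
    calc η*B/M * (exp (M*t) - 1) ≤ η*B * (exp (M*t) - 1) :=
          mul_le_mul_of_nonneg_right hd1 h0
      _ ≤ η*B*exp (M*L) := by
          apply mul_le_mul_of_nonneg_left he1 (by positivity)
  exact le_trans h2 (le_trans h1 h3)

/-- near-zero quantitative positivity -/
lemma near_zero (hM1 : 1 ≤ M) (hWM : ∀ t, |W t| ≤ M) (hB1 : 1 ≤ B)
    (hF0 : F 0 = 0) (hG0 : G 0 = 1)
    (hFd : ∀ t, HasDerivAt F (G t) t)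
    (hGd : ∀ t ∈ Icc 0 L, HasDerivAt G (-W t * F t) t)
    (hFb : ∀ t ∈ Icc 0 L, |F t| ≤ B) :
    ∀ t ∈ Icc 0 (min (1/(2*M*B)) L), t/2 ≤ F t := by
  have hM0 : (0:ℝ) < M := lt_of_lt_of_le zero_lt_one hM1
  have hB0 : (0:ℝ) < B := lt_of_lt_of_le zero_lt_one hB1
  set δ := min (1/(2*M*B)) L with hδ
  have hδL : δ ≤ L := min_le_right _ _
  have hsub : Icc (0:ℝ) δ ⊆ Icc 0 L := Icc_subset_Icc le_rfl hδL
  -- G is Lipschitz with constant M*B on [0,L]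
  have hGlip : ∀ x ∈ Icc (0:ℝ) L, ∀ y ∈ Icc (0:ℝ) L, |G y - G x| ≤ M*B*|y - x| := by
    intro x hx y hy
    have := Convex.norm_image_sub_le_of_norm_hasDerivWithin_le
      (f := G) (f' := fun t => -W t * F t) (s := Icc 0 L) (C := M*B)
      (fun t ht => (hGd t ht).hasDerivWithinAt)
      (fun t ht => by
        rw [Real.norm_eq_abs, abs_mul, abs_neg]
        exact mul_le_mul (hWM t) (hFb t ht) (abs_nonneg _) hM0.le)
      (convex_Icc 0 L) hx hy
    simpa [Real.norm_eq_abs] using this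
  have hGge : ∀ t ∈ Icc (0:ℝ) δ, (1:ℝ)/2 ≤ G t := by
    intro t ht
    have h1 := hGlip 0 ⟨le_rfl, le_trans (ht.1.trans ht.2) hδL⟩ t (hsub ht)
    rw [hG0] at h1
    have h2 : |t - 0| = t := by rw [sub_zero, abs_of_nonneg ht.1]
    rw [h2] at h1
    have h3 : M*B*t ≤ 1/2 := by
      have htδ : t ≤ 1/(2*M*B) := le_trans ht.2 (min_le_left _ _)
      calc M*B*t ≤ M*B*(1/(2*M*B)) := mul_le_mul_of_nonneg_left htδ (by positivity)
        _ = 1/2 := by field_simp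
    have := abs_le.1 h1
    linarith [this.2]
  intro t ht
  have key := Convex.mul_sub_le_image_sub_of_le_deriv (convex_Icc (0:ℝ) δ)
    (f := F) (fun s _ => (hFd s).continuousAt.continuousWithinAt)
    (fun s _ => (hFd s).differentiableAt.differentiableWithinAt)
    (C := 1/2)
    (fun s hs => by
      rw [(hFd s).deriv]
      exact hGge s (interior_subset hs))
    0 ⟨le_rfl, ht.1.trans ht.2⟩ t ht ht.1
  rw [hF0, sub_zero, sub_zero] at key
  linarith
end Lemmas


section Sturm
variable {W : ℝ → ℝ} {M L : ℝ} {F G : ℝ → ℝ}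

lemma sin_deriv (r : ℝ) (t : ℝ) : HasDerivAt (fun u => sin (r*u)) (r * cos (r*t)) t := by
  have h := (Real.hasDerivAt_sin (r*t)).comp t ((hasDerivAt_id t).const_mul r)
  exact h.congr_deriv (by ring)

lemma cos_deriv (r : ℝ) (t : ℝ) :
    HasDerivAt (fun u => r * cos (r*u)) (-(r*r * sin (r*t))) t := by
  have h := ((Real.hasDerivAt_cos (r*t)).comp t ((hasDerivAt_id t).const_mul r)).const_mul r
  exact h.congr_deriv (by ring)

/-- the Wronskian-type auxiliary derivative -/
lemma wronskian_deriv {m : ℝ} (r : ℝ) (hr : r*r = m)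
    (hFd : ∀ t, HasDerivAt F (G t) t)
    (hGd : ∀ t ∈ Icc 0 L, HasDerivAt G (-W t * F t) t)
    {t : ℝ} (ht : t ∈ Icc 0 L) :
    HasDerivAt (fun u => F u * (r * cos (r*u)) - G u * sin (r*u))
      ((W t - m) * (F t * sin (r*t))) t := by
  have h1 := (hFd t).mul (cos_deriv r t)
  have h2 := (hGd t ht).mul (sin_deriv r t)
  have h3 := h1.sub h2
  refine h3.congr_deriv ?_
  rw [← hr]
  ring

/-- Sturm oscillation: F must vanish somewhere in (0, π/√m] -/
lemma sturm_osc {m : ℝ} (hm : 0 < m) (hWm : ∀ t ∈ Icc 0 L, m ≤ W t)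
    (hTL : π/Real.sqrt m ≤ L) (hF0 : F 0 = 0)
    (hFd : ∀ t, HasDerivAt F (G t) t)
    (hGd : ∀ t ∈ Icc 0 L, HasDerivAt G (-W t * F t) t)
    (hpos : ∀ t ∈ Ioc 0 (π/Real.sqrt m), 0 < F t) : False := by
  set r := Real.sqrt m with hrdef
  have hr0 : 0 < r := Real.sqrt_pos.2 hm
  have hrr : r*r = m := Real.mul_self_sqrt hm.le
  set T := π/r with hT
  have hT0 : 0 < T := div_pos Real.pi_pos hr0
  have hrT : r * T = π := by rw [hT]; field_simp [hr0.ne']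
  set h : ℝ → ℝ := fun u => F u * (r * cos (r*u)) - G u * sin (r*u) with hh
  have hsub : Icc (0:ℝ) T ⊆ Icc 0 L := Icc_subset_Icc le_rfl hTL
  have hderiv : ∀ t ∈ Icc (0:ℝ) T, HasDerivAt h ((W t - m) * (F t * sin (r*t))) t :=
    fun t ht => wronskian_deriv r hrr hFd hGd (hsub ht)
  have key := Convex.mul_sub_le_image_sub_of_le_deriv (convex_Icc (0:ℝ) T)
    (f := h)
    (fun t ht => (hderiv t ht).continuousAt.continuousWithinAt)
    (fun t ht => ((hderiv t (interior_subset ht)).differentiableAt).differentiableWithinAt)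
    (C := 0)
    (fun t ht => by
      rw [interior_Icc] at ht
      rw [(hderiv t (Ioo_subset_Icc_self ht)).deriv]
      have h1 : 0 ≤ W t - m := sub_nonneg.2 (hWm t (hsub (Ioo_subset_Icc_self ht)))
      have h2 : 0 < F t := hpos t ⟨ht.1, ht.2.le⟩
      have h3 : 0 ≤ sin (r*t) := by
        apply sin_nonneg_of_nonneg_of_le_pi (mul_nonneg hr0.le ht.1.le)
        rw [← hrT]
        exact mul_le_mul_of_nonneg_left ht.2.le hr0.le
      exact mul_nonneg h1 (mul_nonneg h2.le h3))
    0 ⟨le_rfl, hT0.le⟩ T ⟨hT0.le, le_rfl⟩ hT0.le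
  have hh0 : h 0 = 0 := by rw [hh]; simp [hF0]
  have hhT : h T = -(r * F T) := by
    have h1 : h T = F T * (r * cos (r*T)) - G T * sin (r*T) := by rw [hh]
    rw [h1, hrT, Real.cos_pi, Real.sin_pi]
    ring
  have hFT : 0 < F T := hpos T ⟨hT0, le_rfl⟩
  rw [hh0, hhT, zero_mul] at key
  nlinarith

/-- Sturm positivity: at a first zero before π/√M, the derivative G would also vanish -/
lemma sturm_pos (hM0 : 0 < M) (hWM' : ∀ t ∈ Icc 0 L, W t ≤ M)
    {s : ℝ} (hs : 0 < s) (hsL : s ≤ L) (hsa : s < π/Real.sqrt M)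
    (hF0 : F 0 = 0) (hFs : F s = 0)
    (hFd : ∀ t, HasDerivAt F (G t) t)
    (hGd : ∀ t ∈ Icc 0 L, HasDerivAt G (-W t * F t) t)
    (hFpos : ∀ t ∈ Ioo 0 s, 0 < F t) : G s = 0 := by
  set r := Real.sqrt M with hrdef
  have hr0 : 0 < r := Real.sqrt_pos.2 hM0
  have hrr : r*r = M := Real.mul_self_sqrt hM0.le
  have hrs : r * s < π := by
    have := mul_lt_mul_of_pos_left hsa hr0
    rwa [mul_div_cancel₀ _ (ne_of_gt hr0)] at this
  -- Part 1 : G s ≤ 0 via left slopes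
  have hGle : G s ≤ 0 := by
    have hts := hasDerivAt_iff_tendsto_slope.1 (hFd s)
    have h2 : Tendsto (slope F s) (nhdsWithin s (Iio s)) (nhds (G s)) :=
      hts.mono_left (nhdsWithin_mono s (fun x hx => ne_of_lt hx))
    apply le_of_tendsto h2
    filter_upwards [Ioo_mem_nhdsLT_of_mem (show s ∈ Ioc 0 s from ⟨hs, le_rfl⟩)] with t ht
    rw [slope_def_field, hFs, sub_zero]
    apply div_nonpos_of_nonneg_of_nonpos (hFpos t ht).le
    linarith [ht.2]
  -- Part 2 : G s ≥ 0 via Wronskian comparison with sin (√M t)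
  have hGge : 0 ≤ G s := by
    set h : ℝ → ℝ := fun u => F u * (r * cos (r*u)) - G u * sin (r*u) with hh
    have hsub : Icc (0:ℝ) s ⊆ Icc 0 L := Icc_subset_Icc le_rfl hsL
    have hderiv : ∀ t ∈ Icc (0:ℝ) s, HasDerivAt h ((W t - M) * (F t * sin (r*t))) t :=
      fun t ht => wronskian_deriv r hrr hFd hGd (hsub ht)
    have key := Convex.image_sub_le_mul_sub_of_deriv_le (convex_Icc (0:ℝ) s)
      (f := h)
      (fun t ht => (hderiv t ht).continuousAt.continuousWithinAt)
      (fun t ht => ((hderiv t (interior_subset ht)).differentiableAt).differentiableWithinAt)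
      (C := 0)
      (fun t ht => by
        rw [interior_Icc] at ht
        rw [(hderiv t (Ioo_subset_Icc_self ht)).deriv]
        have h1 : W t - M ≤ 0 := sub_nonpos.2 (hWM' t (hsub (Ioo_subset_Icc_self ht)))
        have h2 : 0 < F t := hFpos t ht
        have h3 : 0 ≤ sin (r*t) := by
          apply sin_nonneg_of_nonneg_of_le_pi (mul_nonneg hr0.le ht.1.le)
          have := mul_le_mul_of_nonneg_left ht.2.le hr0.le
          linarith
        nlinarith [mul_nonneg h2.le h3, h1])
      0 ⟨le_rfl, hs.le⟩ s ⟨hs.le, le_rfl⟩ hs.le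
    have hh0 : h 0 = 0 := by rw [hh]; simp [hF0]
    have hhs : h s = -(G s * sin (r*s)) := by
      have h1 : h s = F s * (r * cos (r*s)) - G s * sin (r*s) := by rw [hh]
      rw [h1, hFs]
      ring
    rw [hh0, hhs, zero_mul] at key
    have hsin : 0 < sin (r*s) := sin_pos_of_pos_of_lt_pi (by positivity) hrs
    nlinarith
  linarith
end Sturm

end HamChord

set_option maxHeartbeats 2000000 in
open Set Real Filter HamChord in
theorem hamiltonian_chord_exists
    (V : ℝ → ℝ) (hV : ContDiff ℝ (⊤ : ℕ∞) V)
    (E : ℝ) (hE : ∀ t ∈ Set.Icc (0 : ℝ) 1, 0 < E - V t) :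
    ∃ τ : ℝ, 0 < τ ∧ ∃ q : ℝ → EuclideanSpace ℝ (Fin 2),
      ContDiff ℝ 2 q ∧
      q 0 = 0 ∧ q τ = 0 ∧
      (∃ t ∈ Set.Icc (0 : ℝ) τ, q t ≠ 0) ∧
      (∀ t ∈ Set.Icc (0 : ℝ) τ, deriv (deriv q) t = (-(E - V (t / τ))) • q t) := by
  classical
  have hVc : Continuous V := hV.continuous
  -- min and max of E - V on [0,1]
  obtain ⟨u₀, hu₀m, hu₀⟩ := isCompact_Icc.exists_isMinOn (α := ℝ) (s := Icc (0:ℝ) 1)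
    ⟨0, by norm_num⟩ (f := fun u => E - V u) (continuous_const.sub hVc).continuousOn
  obtain ⟨u₁, hu₁m, hu₁⟩ := isCompact_Icc.exists_isMaxOn (α := ℝ) (s := Icc (0:ℝ) 1)
    ⟨0, by norm_num⟩ (f := fun u => E - V u) (continuous_const.sub hVc).continuousOn
  set m : ℝ := E - V u₀ with hmdef
  have hm : 0 < m := hE u₀ hu₀m
  have hmle : ∀ u ∈ Icc (0:ℝ) 1, m ≤ E - V u := fun u hu => hu₀ hu
  set M : ℝ := max (E - V u₁) 1 with hMdef
  have hM1 : (1:ℝ) ≤ M := le_max_right _ _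
  have hM0 : (0:ℝ) < M := lt_of_lt_of_le zero_lt_one hM1
  have hMge : ∀ u ∈ Icc (0:ℝ) 1, E - V u ≤ M := fun u hu =>
    le_trans (hu₁ hu) (le_max_left _ _)
  have hmM : m ≤ M := le_trans (hmle u₁ hu₁m) (le_max_left _ _)
  set a : ℝ := π / Real.sqrt M with hadef
  set b : ℝ := π / Real.sqrt m with hbdef
  set L : ℝ := b + 1 with hLdef
  have hsm : 0 < Real.sqrt m := Real.sqrt_pos.2 hm
  have hsM : 0 < Real.sqrt M := Real.sqrt_pos.2 hM0
  have ha0 : 0 < a := div_pos pi_pos hsM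
  have hb0 : 0 < b := div_pos pi_pos hsm
  have hab : a ≤ b := div_le_div_of_nonneg_left pi_pos.le hsm (Real.sqrt_le_sqrt hmM)
  have hbL : b < L := by rw [hLdef]; linarith
  have hL0 : (0:ℝ) < L := by linarith
  have haL : a < L := lt_of_le_of_lt hab hbL
  -- family of potentials
  set Wf : ℝ → ℝ → ℝ := fun τ t => E - V (cl (t / max τ a)) with hWfdef
  have hWc : ∀ τ, Continuous (Wf τ) := by
    intro τ
    apply continuous_const.sub
    exact hVc.comp (cl_continuous.comp (continuous_id.div_const _))
  have hWm : ∀ τ t, m ≤ Wf τ t := fun τ t => hmle _ (cl_mem _)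
  have hWM : ∀ τ t, Wf τ t ≤ M := fun τ t => hMge _ (cl_mem _)
  have habs : ∀ τ, ∀ t, |Wf τ t| ≤ M := by
    intro τ t
    rw [abs_le]
    exact ⟨by nlinarith [hWm τ t], hWM τ t⟩
  -- choose solution packages
  have hpk := fun τ : ℝ => solution_package (hWc τ) hM1 (habs τ) hL0
  choose Fc Gc hcd hF0 hG0 hFd hGd hBnd using hpk
  have hFcont : ∀ τ, Continuous (Fc τ) := fun τ => (hcd τ).continuous
  set B : ℝ := exp (M*L) with hBdef
  have hB1 : (1:ℝ) ≤ B := by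
    rw [hBdef, ← exp_zero]
    exact exp_le_exp.2 (by positivity)
  have hB0 : (0:ℝ) < B := lt_of_lt_of_le zero_lt_one hB1
  set δ : ℝ := min (1/(2*M*B)) L with hδdef
  have hδ0 : 0 < δ := lt_min (by positivity) hL0
  have hNZ : ∀ τ, ∀ t ∈ Icc 0 δ, t/2 ≤ Fc τ t := fun τ =>
    near_zero hM1 (habs τ) hB1 (hF0 τ) (hG0 τ) (hFd τ) (hGd τ)
      (fun t ht => (hBnd τ t ht).1)
  have hδa : δ ≤ a := by
    have h1 : δ ≤ 1/(2*M*B) := min_le_left _ _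
    have h2 : 1/(2*M*B) ≤ 1/(2*M) := by
      apply div_le_div_of_nonneg_left zero_le_one (by positivity)
      nlinarith
    have h3 : 1/(2*M) ≤ π/M := by
      rw [div_le_div_iff₀ (by positivity) hM0]
      nlinarith [pi_gt_three]
    have h4 : π/M ≤ π/Real.sqrt M := by
      apply div_le_div_of_nonneg_left pi_pos.le hsM
      nlinarith [Real.sq_sqrt hM0.le, Real.sqrt_nonneg M, hsM]
    rw [hadef]
    linarith
  have hδL : δ ≤ L := min_le_right _ _
  have hFδpos : ∀ τ, 0 < Fc τ δ := fun τ =>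
    lt_of_lt_of_le (by positivity) (hNZ τ δ ⟨hδ0.le, le_rfl⟩)
  -- "no zero up to c implies positive up to c"
  have hposof : ∀ τ c, c ≤ L → (∀ z, 0 < z → z ≤ c → Fc τ z ≠ 0) →
      ∀ t, 0 < t → t ≤ c → 0 < Fc τ t := by
    intro τ c hcL hnz t ht0 htc
    rcases le_or_gt t δ with h | h
    · exact lt_of_lt_of_le (half_pos ht0) (hNZ τ t ⟨ht0.le, h⟩)
    · rcases lt_or_ge 0 (Fc τ t) with h' | h'
      · exact h'
      have hlt : Fc τ t < 0 := lt_of_le_of_ne h' (hnz t ht0 htc)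
      exfalso
      have hIVT := intermediate_value_Icc' (le_of_lt h) ((hFcont τ).continuousOn)
      have h0m : (0:ℝ) ∈ Icc (Fc τ t) (Fc τ δ) := ⟨hlt.le, (hFδpos τ).le⟩
      obtain ⟨y, hy, hFy⟩ := hIVT h0m
      exact hnz y (lt_of_lt_of_le hδ0 hy.1) (le_trans hy.2 htc) hFy
  -- no zero before a
  have hS2 : ∀ τ, ∀ t, 0 < t → t < a → 0 < Fc τ t := by
    intro τ t ht0 hta
    have hnz : ∀ z, 0 < z → z ≤ t → Fc τ z ≠ 0 := by
      intro z hz0 hzt hFz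
      -- extract first zero
      have hzL : z ≤ L := le_trans hzt (le_trans hta.le haL.le)
      have hδz : δ < z := by
        rcases le_or_gt z δ with h | h
        · exfalso
          have := hNZ τ z ⟨hz0.le, h⟩
          rw [hFz] at this
          linarith
        · exact h
      set Z : Set ℝ := Icc δ z ∩ (Fc τ) ⁻¹' {0} with hZdef
      have hZc : IsClosed Z := isClosed_Icc.inter (isClosed_singleton.preimage (hFcont τ))
      have hZne : Z.Nonempty := ⟨z, ⟨hδz.le, le_rfl⟩, hFz⟩
      have hZbdd : BddBelow Z := ⟨δ, fun x hx => hx.1.1⟩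
      set s := sInf Z with hsdef
      have hsZ : s ∈ Z := hZc.csInf_mem hZne hZbdd
      have hs0 : 0 < s := lt_of_lt_of_le hδ0 hsZ.1.1
      have hsz : s ≤ z := hsZ.1.2
      have hposs : ∀ u ∈ Ioo (0:ℝ) s, 0 < Fc τ u := by
        intro u hu
        rcases le_or_gt u δ with h | h
        · exact lt_of_lt_of_le (half_pos hu.1) (hNZ τ u ⟨hu.1.le, h⟩)
        · rcases lt_or_ge 0 (Fc τ u) with h' | h'
          · exact h'
          exfalso
          have hune : Fc τ u ≠ 0 := by
            intro h0
            have : s ≤ u := csInf_le hZbdd ⟨⟨h.le, le_trans hu.2.le hsz⟩, h0⟩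
            exact absurd hu.2 (not_lt.2 this)
          have hult : Fc τ u < 0 := lt_of_le_of_ne h' hune
          have hIVT := intermediate_value_Icc' (le_of_lt h) ((hFcont τ).continuousOn)
          obtain ⟨y, hy, hFy⟩ := hIVT ⟨hult.le, (hFδpos τ).le⟩
          have : s ≤ y := csInf_le hZbdd ⟨⟨hy.1, le_trans hy.2 (le_trans hu.2.le hsz)⟩, hFy⟩
          have : ¬ (y ≤ u) := fun hyu => absurd (lt_of_le_of_lt this (lt_of_le_of_lt hyu hu.2))
            (lt_irrefl s)
          exact this hy.2
      have hGs := sturm_pos hM0 (fun u _ => hWM τ u) hs0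
        (le_trans hsz hzL) (lt_of_le_of_lt (le_trans hsz hzt) hta)
        (hF0 τ) hsZ.2 (hFd τ) (hGd τ) hposs
      have hkill := kill hM1 (habs τ) (hFd τ) (hGd τ)
        (s := s) ⟨hs0, lt_of_le_of_lt (le_trans hsz hzt) (lt_trans hta haL)⟩ hsZ.2 hGs
      have := hkill δ ⟨hδ0.le, hδL⟩
      exact absurd this (ne_of_gt (hFδpos τ))
    exact hposof τ t (le_trans hta.le haL.le) hnz t ht0 le_rfl
  -- a zero exists in (0, b]
  have hS1 : ∀ τ, ∃ z, (0 < z ∧ z ≤ b) ∧ Fc τ z = 0 := by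
    intro τ
    by_contra hno
    push_neg at hno
    have hnz : ∀ z, 0 < z → z ≤ b → Fc τ z ≠ 0 := fun z h1 h2 => hno z ⟨h1, h2⟩
    have hpos : ∀ t ∈ Ioc (0:ℝ) (π/Real.sqrt m), 0 < Fc τ t := by
      intro t ht
      exact hposof τ b hbL.le hnz t ht.1 ht.2
    exact sturm_osc hm (fun u _ => hWm τ u) (le_of_lt hbL) (hF0 τ) (hFd τ) (hGd τ) hpos
  -- the continuity-in-parameter estimate at a point τ₀ ∈ [a,b]
  have hdep : ∀ τ₀ ∈ Icc a b, ∀ ν : ℝ, 0 < ν → ∃ ρ : ℝ, 0 < ρ ∧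
      ∀ σ ∈ Icc a b, |σ - τ₀| ≤ ρ → ∀ t ∈ Icc 0 L, |Fc σ t - Fc τ₀ t| ≤ ν := by
    intro τ₀ hτ₀ ν hν
    have hVuc := isCompact_Icc.uniformContinuousOn_of_continuous (s := Icc (0:ℝ) 1)
      hVc.continuousOn
    set η : ℝ := ν / (B * exp (M*L)) with hηdef
    have hη0 : 0 < η := by positivity
    obtain ⟨δV, hδV0, hδV⟩ := Metric.uniformContinuousOn_iff.1 hVuc η hη0
    set ρ : ℝ := δV * a^2 / (2*L) with hρdef
    refine ⟨ρ, div_pos (mul_pos hδV0 (pow_pos ha0 2)) (by linarith), ?_⟩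
    intro σ hσ hσρ t ht
    -- potential closeness
    have hWd : ∀ u ∈ Icc (0:ℝ) L, |Wf σ u - Wf τ₀ u| ≤ η := by
      intro u hu
      have hmaxσ : max σ a = σ := max_eq_left hσ.1
      have hmaxτ : max τ₀ a = τ₀ := max_eq_left hτ₀.1
      have hcl : |cl (u / σ) - cl (u / τ₀)| ≤ |u / σ - u / τ₀| := cl_lip _ _
      have hquot : |u / σ - u / τ₀| ≤ L * |σ - τ₀| / a^2 := by
        have hσ0 : 0 < σ := lt_of_lt_of_le ha0 hσ.1
        have hτ00 : 0 < τ₀ := lt_of_lt_of_le ha0 hτ₀.1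
        have h1 : u / σ - u / τ₀ = u * (τ₀ - σ) / (σ * τ₀) := by field_simp
        rw [h1, abs_div, abs_mul]
        have h2 : |u| ≤ L := by rw [abs_of_nonneg hu.1]; exact hu.2
        have h3 : |τ₀ - σ| = |σ - τ₀| := abs_sub_comm _ _
        have h4 : a^2 ≤ |σ * τ₀| := by
          rw [abs_of_pos (mul_pos hσ0 hτ00)]
          nlinarith [hσ.1, hτ₀.1, ha0]
        rw [h3]
        apply div_le_div₀ (by positivity) (mul_le_mul h2 le_rfl (abs_nonneg _) hL0.le)
          (by positivity) h4
      have hless : |cl (u/σ) - cl (u/τ₀)| < δV ∨ cl (u/σ) = cl (u/τ₀) := by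
        rcases eq_or_ne (cl (u/σ)) (cl (u/τ₀)) with h | h
        · exact Or.inr h
        · left
          calc |cl (u/σ) - cl (u/τ₀)| ≤ |u/σ - u/τ₀| := hcl
            _ ≤ L * |σ - τ₀| / a^2 := hquot
            _ ≤ L * ρ / a^2 := by
                apply div_le_div_of_nonneg_right ?_ (by positivity)
                exact mul_le_mul_of_nonneg_left hσρ hL0.le
            _ = δV / 2 := by rw [hρdef]; field_simp
            _ < δV := by linarith
      have : |V (cl (u/σ)) - V (cl (u/τ₀))| ≤ η := by
        rcases hless with h | h
        · have := hδV _ (cl_mem _) _ (cl_mem _) (by rwa [Real.dist_eq])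
          rw [Real.dist_eq] at this
          exact this.le
        · rw [h]; simp [hη0.le]
      have heq : Wf σ u - Wf τ₀ u = -(V (cl (u/σ)) - V (cl (u/τ₀))) := by
        rw [hWfdef]
        simp only [hmaxσ, hmaxτ]
        ring
      rw [heq, abs_neg]
      exact this
    have := dep (W := Wf σ) (W₂ := Wf τ₀) hM1 (habs σ) (hF0 σ) (hG0 σ) (hF0 τ₀) (hG0 τ₀)
      (hFd σ) (hGd σ) (hFd τ₀) (hGd τ₀) hη0.le (by positivity : (0:ℝ) ≤ B) hWd
      (fun u hu => (hBnd τ₀ u hu).1) t ht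
    calc |Fc σ t - Fc τ₀ t| ≤ η * B * exp (M*L) := this
      _ = ν := by
          rw [hηdef]
          field_simp
  -- KEY: exists τ ∈ [a,b] with Fc τ τ = 0
  have key : ∃ τ, τ ∈ Icc a b ∧ Fc τ τ = 0 := by
    by_contra hno
    push_neg at hno
    -- the set S
    set S : Set ℝ := {τ | τ ∈ Icc a b ∧ ∀ t ∈ Ioc (0:ℝ) τ, 0 < Fc τ t} with hSdef
    have hedge : ∀ τ, 0 < τ → (∀ t ∈ Ioo (0:ℝ) τ, 0 ≤ Fc τ t) → 0 ≤ Fc τ τ := by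
      intro τ hτ hp
      have htd : Tendsto (Fc τ) (nhdsWithin τ (Iio τ)) (nhds (Fc τ τ)) :=
        ((hFcont τ).tendsto τ).mono_left nhdsWithin_le_nhds
      apply ge_of_tendsto htd
      filter_upwards [Ioo_mem_nhdsLT_of_mem (show τ ∈ Ioc (0:ℝ) τ from ⟨hτ, le_rfl⟩)] with
        t ht
      exact hp t ht
    have haS : a ∈ S := by
      refine ⟨⟨le_rfl, hab⟩, ?_⟩
      intro t ht
      rcases eq_or_lt_of_le ht.2 with h | h
      · rw [h]
        have h0 := hedge a ha0 (fun u hu => (hS2 a u hu.1 hu.2).le)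
        exact lt_of_le_of_ne h0 (Ne.symm (hno a ⟨le_rfl, hab⟩))
      · exact hS2 a t ht.1 h
    have hSsub : S ⊆ Icc a b := fun τ hτ => hτ.1
    have hSbdd : BddAbove S := ⟨b, fun τ hτ => hτ.1.2⟩
    have hbnotS : b ∉ S := by
      intro hbS
      obtain ⟨z, ⟨hz0, hzb⟩, hFz⟩ := hS1 b
      exact absurd hFz (ne_of_gt (hbS.2 z ⟨hz0, hzb⟩))
    set τs : ℝ := sSup S with hτsdef
    have haτ : a ≤ τs := le_csSup hSbdd haS
    have hτb : τs ≤ b := csSup_le ⟨a, haS⟩ (fun x hx => hx.1.2)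
    have hτ0 : 0 < τs := lt_of_lt_of_le ha0 haτ
    have hτmem : τs ∈ Icc a b := ⟨haτ, hτb⟩
    have hτsL : τs < L := lt_of_le_of_lt hτb hbL
    -- claim 1 : nonnegative before τs
    have hC1 : ∀ s, s ∈ Ioo 0 τs → 0 ≤ Fc τs s := by
      intro s hsmem
      by_contra hneg
      push_neg at hneg
      set ν : ℝ := -(Fc τs s)/2 with hνdef
      have hν0 : 0 < ν := by rw [hνdef]; linarith
      obtain ⟨ρ, hρ0, hρ⟩ := hdep τs hτmem ν hν0
      obtain ⟨τ, hτS, hττ⟩ := exists_lt_of_lt_csSup ⟨a, haS⟩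
        (show max s (τs - ρ) < τs by
          apply max_lt hsmem.2
          linarith)
      have hτle : τ ≤ τs := le_csSup hSbdd hτS
      have hd1 : |τ - τs| ≤ ρ := by
        rw [abs_le]
        constructor
        · have := le_of_lt (lt_of_le_of_lt (le_max_right s (τs - ρ)) hττ)
          linarith
        · linarith
      have hsL' : s ∈ Icc (0:ℝ) L := ⟨hsmem.1.le, le_trans hsmem.2.le hτsL.le⟩
      have := hρ τ (hSsub hτS) hd1 s hsL'
      have hFτs : 0 < Fc τ s := hτS.2 s ⟨hsmem.1,
        le_of_lt (lt_of_le_of_lt (le_max_left s (τs - ρ)) hττ)⟩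
      rw [abs_le] at this
      have := this.1
      rw [hνdef] at this
      linarith
    -- claim 2 : no zero strictly inside
    have hC2 : ∀ z, z ∈ Ioo 0 τs → Fc τs z ≠ 0 := by
      intro z hz hFz
      have hmin : IsLocalMin (Fc τs) z := by
        filter_upwards [Ioo_mem_nhds hz.1 hz.2] with t ht
        rw [hFz]
        exact hC1 t ht
      have hGz : Gc τs z = 0 := hmin.hasDerivAt_eq_zero (hFd τs z)
      have hkill := kill hM1 (habs τs) (hFd τs) (hGd τs)
        (s := z) ⟨hz.1, lt_trans hz.2 hτsL⟩ hFz hGz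
      exact absurd (hkill δ ⟨hδ0.le, hδL⟩) (ne_of_gt (hFδpos τs))
    -- claim 3 : τs ∈ S
    have hC3 : τs ∈ S := by
      refine ⟨hτmem, ?_⟩
      intro t ht
      rcases eq_or_lt_of_le ht.2 with h | h
      · rw [h]
        have h0 := hedge τs hτ0 (fun u hu => hC1 u hu)
        exact lt_of_le_of_ne h0 (Ne.symm (hno τs hτmem))
      · exact lt_of_le_of_ne (hC1 t ⟨ht.1, h⟩) (Ne.symm (hC2 t ⟨ht.1, h⟩))
    have hτsb : τs < b := lt_of_le_of_ne hτb (fun h => hbnotS (h ▸ hC3))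
    -- continuity of Fc τs at τs : positivity slightly beyond
    have hFττ : 0 < Fc τs τs := hC3.2 τs ⟨hτ0, le_rfl⟩
    obtain ⟨ε₀, hε₀0, hε₀⟩ := Metric.continuousAt_iff.1 ((hFcont τs).continuousAt (x := τs))
      (Fc τs τs / 2) (by linarith)
    set ε₁ : ℝ := min (ε₀/2) (b - τs) with hε₁def
    have hε₁0 : 0 < ε₁ := lt_min (by linarith) (by linarith)
    have hbig : ∀ t ∈ Icc τs (τs + ε₁), Fc τs τs / 2 ≤ Fc τs t := by
      intro t ht
      have hd : dist t τs < ε₀ := by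
        rw [Real.dist_eq, abs_of_nonneg (by linarith [ht.1])]
        have := ht.2
        have h1 : ε₁ ≤ ε₀/2 := min_le_left _ _
        linarith
      have := hε₀ hd
      rw [Real.dist_eq, abs_lt] at this
      linarith [this.1]
    -- minimum on [δ, τs]
    have hδτ : δ ≤ τs := le_trans hδa haτ
    obtain ⟨tm, htm, htmin⟩ := isCompact_Icc.exists_isMinOn (α := ℝ) (s := Icc δ τs)
      ⟨δ, ⟨le_rfl, hδτ⟩⟩ ((hFcont τs).continuousOn)
    have hν₀ : 0 < Fc τs tm := hC3.2 tm ⟨lt_of_lt_of_le hδ0 htm.1, htm.2⟩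
    set ν : ℝ := min (Fc τs tm) (Fc τs τs / 2) with hνdef
    have hν0 : 0 < ν := lt_min hν₀ (by linarith)
    obtain ⟨ρ, hρ0, hρ⟩ := hdep τs hτmem (ν/2) (by linarith)
    set τ' : ℝ := min b (τs + min ρ ε₁) with hτ'def
    have hminρε : 0 < min ρ ε₁ := lt_min hρ0 hε₁0
    have hττ' : τs < τ' := by
      apply lt_min hτsb
      linarith
    have hτ'b : τ' ≤ b := min_le_left _ _
    have hτ'a : a ≤ τ' := le_trans haτ hττ'.le
    have hτ'mem : τ' ∈ Icc a b := ⟨hτ'a, hτ'b⟩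
    have hτ'ρ : |τ' - τs| ≤ ρ := by
      rw [abs_of_nonneg (by linarith)]
      have h1 : τ' ≤ τs + min ρ ε₁ := min_le_right _ _
      have h2 : min ρ ε₁ ≤ ρ := min_le_left _ _
      linarith
    have hτ'S : τ' ∈ S := by
      refine ⟨hτ'mem, ?_⟩
      intro t ht
      rcases le_or_gt t δ with h | h
      · exact lt_of_lt_of_le (half_pos ht.1) (hNZ τ' t ⟨ht.1.le, h⟩)
      · have htL : t ∈ Icc (0:ℝ) L := ⟨ht.1.le, le_trans ht.2 (le_trans hτ'b hbL.le)⟩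
        have hclose := hρ τ' hτ'mem hτ'ρ t htL
        have hFts : ν ≤ Fc τs t := by
          rcases le_or_gt t τs with h' | h'
          · have := htmin ⟨h.le, h'⟩
            calc ν ≤ Fc τs tm := min_le_left _ _
              _ ≤ Fc τs t := this
          · have h2 : t ≤ τs + ε₁ := by
              have h3 : t ≤ τ' := ht.2
              have h4 : τ' ≤ τs + min ρ ε₁ := min_le_right _ _
              have h5 : min ρ ε₁ ≤ ε₁ := min_le_right _ _
              linarith
            calc ν ≤ Fc τs τs / 2 := min_le_right _ _
              _ ≤ Fc τs t := hbig t ⟨h'.le, h2⟩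
        rw [abs_le] at hclose
        have := hclose.1
        linarith
    have : τ' ≤ τs := le_csSup hSbdd hτ'S
    linarith
  -- assemble the final data
  obtain ⟨τ, hτmem, hτzero⟩ := key
  have hτ0 : 0 < τ := lt_of_lt_of_le ha0 hτmem.1
  have hτL : τ ≤ L := le_trans hτmem.2 hbL.le
  set e : EuclideanSpace ℝ (Fin 2) := EuclideanSpace.single (0 : Fin 2) (1:ℝ) with hedef
  have he0 : e ≠ 0 := by
    intro h
    have h1 : e 0 = 0 := by rw [h]; rfl
    rw [hedef] at h1
    simp [EuclideanSpace.single_apply] at h1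
  have hWτeq : ∀ t ∈ Icc (0:ℝ) τ, Wf τ t = E - V (t / τ) := by
    intro t ht
    have h1 : max τ a = τ := max_eq_left hτmem.1
    have h2 : t / τ ∈ Icc (0:ℝ) 1 := by
      constructor
      · exact div_nonneg ht.1 hτ0.le
      · rw [div_le_one hτ0]
        exact ht.2
    rw [hWfdef]
    simp only [h1]
    rw [cl_eq h2]
  refine ⟨τ, hτ0, fun t => Fc τ t • e, (hcd τ).smul contDiff_const, ?_, ?_, ?_, ?_⟩
  · show Fc τ 0 • e = 0
    rw [hF0 τ, zero_smul]
  · show Fc τ τ • e = 0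
    rw [hτzero, zero_smul]
  · refine ⟨δ, ⟨hδ0.le, le_trans hδa hτmem.1⟩, ?_⟩
    exact smul_ne_zero (ne_of_gt (hFδpos τ)) he0
  · intro t ht
    have hder1 : deriv (fun x => Fc τ x • e) = fun u => Gc τ u • e :=
      funext fun u => ((hFd τ u).smul_const e).deriv
    rw [hder1]
    have htL : t ∈ Icc (0:ℝ) L := ⟨ht.1, le_trans ht.2 hτL⟩
    have hder2 : deriv (fun u => Gc τ u • e) t = (-Wf τ t * Fc τ t) • e :=
      ((hGd τ t htL).smul_const e).deriv
    rw [hder2, hWτeq t ht, smul_smul]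
end

section
/- Let E ∈ ℝ, let V: ℝ → ℝ be continuous with V(t+1) = V(t) and E − V(t) > 0 for all t, let c > 0 and τ₀ > 0. Then there exists R > 0 such that: for every τ ∈ [0, τ₀] and every continuously differentiable curve (q, p): [0, 1] → ℝ² × ℝ² satisfying q'(t) = τ·p(t) and p'(t) = −τ·(E − V(t))·q(t) for all t ∈ [0, 1], together with the mean-energy constraint ∫₀¹ (‖p(t)‖²/2 + (E − V(t))·‖q(t)‖²/2 − c) dt = 0, one has ‖(q(t), p(t))‖ ≤ R for all t ∈ [0, 1]. -/
open Set Real intervalIntegral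

local notation "⟪" x ", " y "⟫" => @inner ℝ _ _ x y

/- STATEMENT 9: A priori confinement: for a 1-periodic continuous V with E − V > 0,
c > 0 and τ₀ > 0, there is R > 0 such that every critical loop (q, p) of the
Rabinowitz action functional with multiplier τ ∈ [0, τ₀] (i.e. q' = τp,
p' = −τ(E−V)q on [0,1] with vanishing mean energy) stays in the ball of radius R. -/
theorem critical_orbits_confined
    (E : ℝ) (V : ℝ → ℝ) (hV : Continuous V) (hper : ∀ t, V (t + 1) = V t)
    (hE : ∀ t, 0 < E - V t) (c τ₀ : ℝ) (hc : 0 < c) (hτ₀ : 0 < τ₀) :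
    ∃ R : ℝ, 0 < R ∧ ∀ τ ∈ Set.Icc (0:ℝ) τ₀,
      ∀ q p : ℝ → EuclideanSpace ℝ (Fin 2),
        (∀ t ∈ Set.Icc (0:ℝ) 1, HasDerivWithinAt q (τ • p t) (Set.Icc (0:ℝ) 1) t) →
        (∀ t ∈ Set.Icc (0:ℝ) 1,
          HasDerivWithinAt p ((-(τ * (E - V t))) • q t) (Set.Icc (0:ℝ) 1) t) →
        (∫ t in (0:ℝ)..1, (‖p t‖ ^ 2 / 2 + (E - V t) * ‖q t‖ ^ 2 / 2 - c)) = 0 →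
        ∀ t ∈ Set.Icc (0:ℝ) 1, Real.sqrt (‖q t‖ ^ 2 + ‖p t‖ ^ 2) ≤ R := by
  -- bound K on |1 - (E - V t)| over [0,1]
  obtain ⟨K, hK⟩ := (isCompact_Icc (a := (0:ℝ)) (b := 1)).exists_bound_of_continuousOn
    ((continuous_const.sub (continuous_const.sub hV)).continuousOn
      (f := fun t => 1 - (E - V t)))
  have hK0 : 0 ≤ K := le_trans (norm_nonneg _) (hK 0 (by norm_num))
  -- positive lower bound m on E - V over [0,1]
  obtain ⟨t₀, ht₀, hmin⟩ := (isCompact_Icc (a := (0:ℝ)) (b := 1)).exists_isMinOn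
    ⟨0, by norm_num⟩ ((continuous_const.sub hV).continuousOn (f := fun x => E - V x))
  set m : ℝ := min (E - V t₀) 1 with hm
  have hm0 : 0 < m := lt_min (hE t₀) one_pos
  have hm1 : m ≤ 1 := min_le_right _ _
  set B : ℝ := 2 * c / m with hBdef
  have hB0 : 0 < B := by positivity
  set C : ℝ := τ₀ * K with hCdef
  have hC0 : 0 ≤ C := by positivity
  refine ⟨Real.sqrt (B * Real.exp C), Real.sqrt_pos.2 (by positivity), ?_⟩
  rintro τ ⟨hτ0, hττ⟩ q p hq hp hint t ht
  have hqc : ContinuousOn q (Icc 0 1) := fun x hx => (hq x hx).continuousWithinAt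
  have hpc : ContinuousOn p (Icc 0 1) := fun x hx => (hp x hx).continuousWithinAt
  set f : ℝ → ℝ := fun x => ‖q x‖ ^ 2 + ‖p x‖ ^ 2 with hfdef
  have hf0 : ∀ x, 0 ≤ f x := fun x => by positivity
  have hfc : ContinuousOn f (Icc 0 1) :=
    ((hqc.norm.pow 2).add (hpc.norm.pow 2))
  set f' : ℝ → ℝ := fun x => 2 * (τ * (1 - (E - V x))) * ⟪q x, p x⟫ with hf'def
  have hfderiv : ∀ x ∈ Icc (0:ℝ) 1, HasDerivWithinAt f (f' x) (Icc 0 1) x := by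
    intro x hx
    have h1 := (HasDerivWithinAt.inner ℝ (hq x hx) (hq x hx)).add
      (HasDerivWithinAt.inner ℝ (hp x hx) (hp x hx))
    have h2 : HasDerivWithinAt f
        (⟪q x, τ • p x⟫ + ⟪τ • p x, q x⟫ + (⟪p x, (-(τ * (E - V x))) • q x⟫ +
          ⟪(-(τ * (E - V x))) • q x, p x⟫)) (Icc 0 1) x := by
      refine h1.congr (fun y _ => ?_) ?_
      · simp only [Pi.add_apply]; rw [real_inner_self_eq_norm_sq, real_inner_self_eq_norm_sq]
      · simp only [Pi.add_apply]; rw [real_inner_self_eq_norm_sq, real_inner_self_eq_norm_sq]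
    convert h2 using 1
    simp only [real_inner_smul_left, real_inner_smul_right,
      real_inner_comm (p x) (q x), hf'def]
    ring
  have hbound : ∀ x ∈ Icc (0:ℝ) 1, |f' x| ≤ C * f x := by
    intro x hx
    have hcs : |⟪q x, p x⟫| ≤ ‖q x‖ * ‖p x‖ := abs_real_inner_le_norm _ _
    have h2 : 2 * (‖q x‖ * ‖p x‖) ≤ ‖q x‖ ^ 2 + ‖p x‖ ^ 2 := by nlinarith [sq_nonneg (‖q x‖ - ‖p x‖)]
    have hKx : |1 - (E - V x)| ≤ K := by simpa using hK x hx
    have habs : |f' x| ≤ 2 * (τ₀ * K) * |⟪q x, p x⟫| := by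
      have hcoef : |2 * (τ * (1 - (E - V x)))| ≤ 2 * (τ₀ * K) := by
        rw [abs_mul, abs_mul, abs_two, abs_of_nonneg hτ0]
        have h1 : τ * |1 - (E - V x)| ≤ τ₀ * K := by
          have := hτ0
          gcongr
        nlinarith
      calc |f' x| = |2 * (τ * (1 - (E - V x)))| * |⟪q x, p x⟫| := by
            rw [hf'def]; rw [abs_mul]
        _ ≤ 2 * (τ₀ * K) * |⟪q x, p x⟫| :=
            mul_le_mul_of_nonneg_right hcoef (abs_nonneg _)
    calc |f' x| ≤ 2 * (τ₀ * K) * |⟪q x, p x⟫| := habs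
      _ ≤ 2 * (τ₀ * K) * (‖q x‖ * ‖p x‖) := by
          have h3 : (0:ℝ) ≤ 2 * (τ₀ * K) := by positivity
          exact mul_le_mul_of_nonneg_left hcs h3
      _ = (τ₀ * K) * (2 * (‖q x‖ * ‖p x‖)) := by ring
      _ ≤ (τ₀ * K) * (‖q x‖ ^ 2 + ‖p x‖ ^ 2) := by
          have h3 : (0:ℝ) ≤ τ₀ * K := by positivity
          exact mul_le_mul_of_nonneg_left h2 h3
      _ = C * f x := rfl
  -- the mean-energy constraint gives a bound on the integral of f
  set h : ℝ → ℝ := fun x => ‖p x‖ ^ 2 / 2 + (E - V x) * ‖q x‖ ^ 2 / 2 with hhdef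
  have hHc : ContinuousOn h (Icc 0 1) := by
    apply ContinuousOn.add
    · exact (hpc.norm.pow 2).div_const 2
    · exact (((continuous_const.sub hV).continuousOn).mul (hqc.norm.pow 2)).div_const 2
  have huIcc : uIcc (0:ℝ) 1 = Icc 0 1 := uIcc_of_le zero_le_one
  have hHi : IntervalIntegrable h MeasureTheory.volume 0 1 :=
    (huIcc ▸ hHc).intervalIntegrable
  have hfi : IntervalIntegrable f MeasureTheory.volume 0 1 :=
    (huIcc ▸ hfc).intervalIntegrable
  have hIH : (∫ x in (0:ℝ)..1, h x) = c := by
    have := intervalIntegral.integral_sub hHi (_root_.intervalIntegrable_const (c := c))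
    rw [hint] at this
    simp only [intervalIntegral.integral_const, sub_zero, smul_eq_mul, one_mul] at this
    linarith
  have hlow : ∀ x ∈ Icc (0:ℝ) 1, m / 2 * f x ≤ h x := by
    intro x hx
    have h1 : E - V t₀ ≤ E - V x := hmin hx
    have h2 : m ≤ E - V x := le_trans (min_le_left _ _) h1
    have h3 : (0:ℝ) ≤ ‖q x‖ ^ 2 := sq_nonneg _
    have h4 : (0:ℝ) ≤ ‖p x‖ ^ 2 := sq_nonneg _
    rw [hhdef, hfdef]
    nlinarith
  have hIf : (∫ x in (0:ℝ)..1, f x) ≤ B := by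
    have hmono : (∫ x in (0:ℝ)..1, m / 2 * f x) ≤ ∫ x in (0:ℝ)..1, h x :=
      intervalIntegral.integral_mono_on zero_le_one (hfi.const_mul _) hHi hlow
    rw [intervalIntegral.integral_const_mul, hIH] at hmono
    rw [hBdef]
    rw [le_div_iff₀ hm0]
    nlinarith
  -- a point where f is at most B
  obtain ⟨s, hsmem, hsmin⟩ := (isCompact_Icc (a := (0:ℝ)) (b := 1)).exists_isMinOn
    ⟨0, by norm_num⟩ hfc
  have hfsB : f s ≤ B := by
    have h1 : (∫ _ in (0:ℝ)..1, f s) ≤ ∫ x in (0:ℝ)..1, f x :=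
      intervalIntegral.integral_mono_on zero_le_one _root_.intervalIntegrable_const hfi
        (fun x hx => hsmin hx)
    rw [intervalIntegral.integral_const, smul_eq_mul, sub_zero, one_mul] at h1
    linarith
  -- Gronwall forward from s
  have hkey : f t ≤ B * Real.exp C := by
    rcases le_total s t with hst | hts
    · -- forward
      have hG := norm_le_gronwallBound_of_norm_deriv_right_le (f := f) (f' := f')
        (δ := B) (K := C) (ε := 0) (a := s) (b := 1)
        (hfc.mono (Icc_subset_Icc hsmem.1 le_rfl))
        (fun y hy => (hfderiv y ⟨le_trans hsmem.1 hy.1, hy.2.le⟩).mono_of_mem_nhdsWithin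
          (Icc_mem_nhdsGE_of_mem ⟨le_trans hsmem.1 hy.1, hy.2⟩))
        (by rw [Real.norm_eq_abs, abs_of_nonneg (hf0 s)]; exact hfsB)
        (fun y hy => by
          rw [Real.norm_eq_abs, Real.norm_eq_abs, abs_of_nonneg (hf0 y), add_zero]
          exact hbound y ⟨le_trans hsmem.1 hy.1, hy.2.le⟩)
        t ⟨hst, ht.2⟩
      rw [Real.norm_eq_abs, abs_of_nonneg (hf0 t), gronwallBound_ε0] at hG
      refine le_trans hG ?_
      have : C * (t - s) ≤ C := by nlinarith [ht.2, hsmem.1]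
      have := Real.exp_le_exp.2 this
      nlinarith [Real.exp_pos (C * (t - s))]
    · -- backward: apply Gronwall to u ↦ f (s - u) on [0, s]
      set g : ℝ → ℝ := fun u => f (s - u) with hgdef
      set g' : ℝ → ℝ := fun u => f' (s - u) * (-1) with hg'def
      have hmaps : MapsTo (fun u => s - u) (Icc 0 s) (Icc (0:ℝ) 1) := by
        intro u hu
        rw [mem_Icc] at hu
        show s - u ∈ Icc (0:ℝ) 1
        rw [mem_Icc]
        exact ⟨by linarith [hu.2], by linarith [hu.1, hsmem.2]⟩
      have hgc : ContinuousOn g (Icc 0 s) :=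
        hfc.comp ((continuous_const.sub continuous_id).continuousOn) hmaps
      have hG := norm_le_gronwallBound_of_norm_deriv_right_le (f := g) (f' := g')
        (δ := B) (K := C) (ε := 0) (a := 0) (b := s)
        hgc
        (fun u hu => by
          have hmem : s - u ∈ Icc (0:ℝ) 1 := hmaps ⟨hu.1, hu.2.le⟩
          have hsub : HasDerivWithinAt (fun y : ℝ => s - y) (-1) (Icc 0 s) u :=
            ((hasDerivAt_id u).const_sub s).hasDerivWithinAt
          have hcomp := HasDerivWithinAt.comp u (hfderiv (s - u) hmem) hsub hmaps
          exact hcomp.mono_of_mem_nhdsWithin (Icc_mem_nhdsGE_of_mem ⟨hu.1, hu.2⟩))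
        (by
          rw [Real.norm_eq_abs]
          have : g 0 = f s := by rw [hgdef]; simp
          rw [this, abs_of_nonneg (hf0 s)]; exact hfsB)
        (fun u hu => by
          have hmem : s - u ∈ Icc (0:ℝ) 1 := hmaps ⟨hu.1, hu.2.le⟩
          have : ‖g' u‖ = |f' (s - u)| := by
            rw [hg'def, Real.norm_eq_abs, abs_mul]; simp
          rw [this, Real.norm_eq_abs, add_zero]
          have : g u = f (s - u) := rfl
          rw [this, abs_of_nonneg (hf0 (s - u))]
          exact hbound (s - u) hmem)
        (s - t) ⟨by linarith [ht.1], by linarith [ht.1]⟩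
      have hgt : g (s - t) = f t := by rw [hgdef]; ring_nf
      rw [hgt, Real.norm_eq_abs, abs_of_nonneg (hf0 t), gronwallBound_ε0, sub_zero] at hG
      refine le_trans hG ?_
      have h1 : C * (s - t) ≤ C := by nlinarith [ht.1, hsmem.2]
      have := Real.exp_le_exp.2 h1
      nlinarith [Real.exp_pos (C * (s - t))]
  exact Real.sqrt_le_sqrt hkey
end

section
/- Let D₁₁, D₂₂: ℝ → ℝ satisfy D₁₁(t) > 0 and D₂₂(t) > 0 for all t, and let a, b, c, d: ℝ → ℝ be differentiable functions satisfying a'(t) = D₂₂(t)·c(t), b'(t) = D₂₂(t)·d(t), c'(t) = −D₁₁(t)·a(t), d'(t) = −D₁₁(t)·b(t), and a(t)·d(t) − b(t)·c(t) = 1 for all t. Then for every t: (a(t)+d(t))² + (b(t)−c(t))² = a(t)² + b(t)² + c(t)² + d(t)² + 2 > 0, and (b'(t) − c'(t))·(a(t)+d(t)) − (b(t)−c(t))·(a'(t)+d'(t)) = D₁₁(t)·(a(t)² + b(t)² + 1) + D₂₂(t)·(c(t)² + d(t)² + 1) > 0. Consequently, the argument of the nonvanishing complex number (a(t)+d(t))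 + i·(b(t)−c(t)) is strictly increasing in t. -/
open Complex


lemma exp_arctan_eq {w : ℂ} (hre : 0 < w.re) :
    (‖w‖ : ℂ) * Complex.exp ((Real.arctan (w.im / w.re) : ℂ) * Complex.I) = w := by
  set s := Real.arctan (w.im / w.re) with hs
  have hw0 : w ≠ 0 := fun h => by simp [h] at hre
  have habs : ‖w‖ = Real.sqrt (w.re ^ 2 + w.im ^ 2) := by
    rw [Complex.norm_def, Complex.normSq_apply]; ring_nf
  have hsqrt : Real.sqrt (1 + (w.im / w.re) ^ 2) = Real.sqrt (w.re ^ 2 + w.im ^ 2) / w.re := by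
    rw [eq_div_iff hre.ne', ← Real.sqrt_sq hre.le]
    · rw [← Real.sqrt_mul (by positivity)]
      congr 1
      field_simp
      rw [Real.sq_sqrt (sq_nonneg _)]
  have hpos : 0 < Real.sqrt (w.re ^ 2 + w.im ^ 2) := by
    apply Real.sqrt_pos.2; positivity
  have hcos : Real.cos s = w.re / Real.sqrt (w.re ^ 2 + w.im ^ 2) := by
    rw [hs, Real.cos_arctan, hsqrt]
    field_simp
  have hsin : Real.sin s = w.im / Real.sqrt (w.re ^ 2 + w.im ^ 2) := by
    rw [hs, Real.sin_arctan, hsqrt]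
    field_simp
  rw [Complex.exp_mul_I]
  apply Complex.ext <;>
    simp [Complex.cos_ofReal_re, ← Complex.ofReal_cos, ← Complex.ofReal_sin,
      hcos, hsin, habs] <;> field_simp

lemma aux_strictMono (x y x' y' : ℝ → ℝ)
    (hx : ∀ t, HasDerivAt x (x' t) t) (hy : ∀ t, HasDerivAt y (y' t) t)
    (hposn : ∀ t, 0 < x t ^ 2 + y t ^ 2)
    (hW : ∀ t, 0 < y' t * x t - y t * x' t)
    (θ : ℝ → ℝ) (hθc : Continuous θ)
    (hcirc : ∀ t, ((x t : ℝ) : ℂ) + ((y t : ℝ) : ℂ) * Complex.I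
      = (‖((x t : ℝ) : ℂ) + ((y t : ℝ) : ℂ) * Complex.I‖ : ℂ)
          * Complex.exp ((θ t : ℂ) * Complex.I)) :
    StrictMono θ := by
  set z : ℝ → ℂ := fun t => (x t : ℂ) + (y t : ℂ) * Complex.I with hzdef
  have hz : ∀ t, HasDerivAt z ((x' t : ℂ) + (y' t : ℂ) * Complex.I) t := fun t =>
    ((hx t).ofReal_comp).add (((hy t).ofReal_comp).mul_const Complex.I)
  have hzre : ∀ t, (z t).re = x t := fun t => by simp [hzdef]
  have hzim : ∀ t, (z t).im = y t := fun t => by simp [hzdef]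
  have hz0 : ∀ t, z t ≠ 0 := by
    intro t h
    have h1 : x t = 0 := by rw [← hzre t, h]; simp
    have h2 : y t = 0 := by rw [← hzim t, h]; simp
    have := hposn t
    rw [h1, h2] at this
    norm_num at this
  have key : ∀ t₀, HasDerivAt θ ((y' t₀ * x t₀ - y t₀ * x' t₀) / (x t₀ ^ 2 + y t₀ ^ 2)) t₀ := by
    intro t₀
    set w : ℝ → ℂ := fun t => z t / z t₀ with hwdef
    set w' : ℂ := ((x' t₀ : ℂ) + (y' t₀ : ℂ) * Complex.I) / z t₀ with hw'def
    have hw : ∀ t, HasDerivAt w (((x' t : ℂ) + (y' t : ℂ) * Complex.I) / z t₀) t := fun t =>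
      (hz t).div_const _
    have hw0 : w t₀ = 1 := div_self (hz0 t₀)
    -- real and imaginary parts of w
    have hwre : HasDerivAt (fun t => (w t).re) w'.re t₀ :=
      (Complex.reCLM.hasFDerivAt.comp_hasDerivAt t₀ (hw t₀))
    have hwim : HasDerivAt (fun t => (w t).im) w'.im t₀ :=
      (Complex.imCLM.hasFDerivAt.comp_hasDerivAt t₀ (hw t₀))
    set g : ℝ → ℝ := fun t => (w t).im / (w t).re with hgdef
    have hg0 : g t₀ = 0 := by simp [hgdef, hw0]
    have hg : HasDerivAt g w'.im t₀ := by
      have := hwim.div hwre (by rw [hw0]; norm_num)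
      have h2 : HasDerivAt g _ t₀ := this
      simpa [hw0] using h2
    -- eventually the real part of w is positive
    have hev : ∀ᶠ t in nhds t₀, 0 < (w t).re := by
      have hc : ContinuousAt (fun t => (w t).re) t₀ :=
        Complex.continuous_re.continuousAt.comp (hw t₀).continuousAt
      have h1 : (fun t => (w t).re) t₀ = 1 := by simp [hw0]
      have hc' : Filter.Tendsto (fun t => (w t).re) (nhds t₀) (nhds 1) := h1 ▸ hc
      exact hc'.eventually (eventually_gt_nhds zero_lt_one)
    -- the candidate local formula for θ
    set α : ℝ → ℝ := fun t => θ t₀ + Real.arctan (g t) with hαdef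
    have hα : HasDerivAt α w'.im t₀ := by
      have := (hg.arctan).const_add (θ t₀)
      simpa [hαdef, hg0] using this
    -- on the set where re w > 0, θ t - θ t₀ - arctan (g t) is a multiple of 2π
    have hearg : ∀ t, 0 < (w t).re →
        ∃ n : ℤ, θ t - θ t₀ - Real.arctan (g t) = n * (2 * Real.pi) := by
      intro t hre
      have habs_t : (‖z t‖ : ℂ) ≠ 0 := by
        exact_mod_cast (norm_ne_zero_iff.mpr (hz0 t))
      have habs_t₀ : (‖z t₀‖ : ℂ) ≠ 0 := by
        exact_mod_cast (norm_ne_zero_iff.mpr (hz0 t₀))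
      have eθ : Complex.exp ((θ t : ℂ) * Complex.I) = z t / (‖z t‖ : ℂ) := by
        rw [eq_div_iff habs_t, mul_comm]
        exact (hcirc t).symm
      have eθ₀ : Complex.exp ((θ t₀ : ℂ) * Complex.I) = z t₀ / (‖z t₀‖ : ℂ) := by
        rw [eq_div_iff habs_t₀, mul_comm]
        exact (hcirc t₀).symm
      have earc : Complex.exp ((Real.arctan (g t) : ℂ) * Complex.I)
          = w t / (‖w t‖ : ℂ) := by
        have habs_w : (‖w t‖ : ℂ) ≠ 0 := by
          have : w t ≠ 0 := fun h => by simp [h] at hre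
          exact_mod_cast (norm_ne_zero_iff.mpr this)
        rw [eq_div_iff habs_w, mul_comm]
        exact exp_arctan_eq hre
      have h1 : Complex.exp ((↑(θ t - θ t₀ - Real.arctan (g t)) : ℂ) * Complex.I) = 1 := by
        rw [Complex.ofReal_sub, Complex.ofReal_sub, sub_mul, sub_mul,
          Complex.exp_sub, Complex.exp_sub, eθ, eθ₀, earc]
        have hwabs : (‖w t‖ : ℂ)
            = (‖z t‖ : ℂ) / (‖z t₀‖ : ℂ) := by
          rw [hwdef]
          push_cast [norm_div]
          ring
        rw [hwdef, hwabs]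
        field_simp
        rw [div_eq_one_iff_eq (by
          exact mul_ne_zero (hz0 t) (hz0 t₀))]
      obtain ⟨n, hn⟩ := Complex.exp_eq_one_iff.1 h1
      refine ⟨n, ?_⟩
      have h2 : (↑(θ t - θ t₀ - Real.arctan (g t)) : ℂ) = (n : ℂ) * (2 * Real.pi) := by
        apply mul_right_cancel₀ Complex.I_ne_zero
        rw [hn]; ring
      exact_mod_cast h2
    -- eventually θ t - θ t₀ - arctan (g t) is small
    have hsmall : ∀ᶠ t in nhds t₀, |θ t - θ t₀ - Real.arctan (g t)| < Real.pi := by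
      have hc : Filter.Tendsto (fun t => θ t - θ t₀ - Real.arctan (g t)) (nhds t₀) (nhds 0) := by
        have hgc : ContinuousAt g t₀ := hg.continuousAt
        have : ContinuousAt (fun t => θ t - θ t₀ - Real.arctan (g t)) t₀ :=
          ((hθc.continuousAt).sub continuousAt_const).sub
            (Real.continuous_arctan.continuousAt.comp hgc)
        have h0 : θ t₀ - θ t₀ - Real.arctan (g t₀) = 0 := by rw [hg0]; simp
        rwa [ContinuousAt, h0] at this
      have := hc.eventually (eventually_abs_sub_lt 0 Real.pi_pos)
      simpa using this
    -- hence θ = α eventually near t₀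
    have heq : θ =ᶠ[nhds t₀] α := by
      filter_upwards [hev, hsmall] with t h1 h2
      obtain ⟨n, hn⟩ := hearg t h1
      have hn0 : n = 0 := by
        by_contra h
        have h3 : (1 : ℝ) ≤ |(n : ℝ)| := by
          exact_mod_cast Int.one_le_abs (by exact_mod_cast h)
        rw [hn, abs_mul] at h2
        have hπ := Real.pi_pos
        have : |(2 : ℝ) * Real.pi| = 2 * Real.pi := abs_of_pos (by linarith)
        rw [this] at h2
        nlinarith
      rw [hn0] at hn
      simp only [Int.cast_zero, zero_mul] at hn
      have : θ t = θ t₀ + Real.arctan (g t) := by linarith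
      rw [this, hαdef]
    have hθd : HasDerivAt θ w'.im t₀ := hα.congr_of_eventuallyEq heq
    have hval : w'.im = (y' t₀ * x t₀ - y t₀ * x' t₀) / (x t₀ ^ 2 + y t₀ ^ 2) := by
      rw [hw'def, Complex.div_im]
      simp only [Complex.add_re, Complex.add_im, Complex.ofReal_re, Complex.ofReal_im,
        Complex.mul_re, Complex.mul_im, Complex.I_re, Complex.I_im, Complex.normSq_apply,
        hzre, hzim]
      have hS : (x t₀ ^ 2 + y t₀ ^ 2) ≠ 0 := (hposn t₀).ne'
      have hS' : (x t₀ * x t₀ + y t₀ * y t₀) ≠ 0 := by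
        intro h; exact hS (by nlinarith)
      field_simp [hS, hS']
      ring
    exact hval ▸ hθd
  apply strictMono_of_deriv_pos
  intro t
  rw [(key t).deriv]
  exact div_pos (hW t) (hposn t)

/- STATEMENT 12: For the linearized flow φ(t) = [[a,b],[c,d]](t) of a Hamiltonian with
positive definite diagonal Hessian D(t) = diag(D₁₁, D₂₂) (so a' = D₂₂c, b' = D₂₂d,
c' = −D₁₁a, d' = −D₁₁b, ad − bc = 1):
(a+d)² + (b−c)² = a² + b² + c² + d² + 2 > 0,
(b'−c')(a+d) − (b−c)(a'+d') = D₁₁(a²+b²+1) + D₂₂(c²+d²+1) > 0,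
and consequently any continuous argument of the nonvanishing complex number
(a+d) + i(b−c) is strictly increasing. -/
theorem winding_angle_strictly_increasing
    (D11 D22 a b c d : ℝ → ℝ)
    (hD11 : ∀ t, 0 < D11 t) (hD22 : ∀ t, 0 < D22 t)
    (ha : ∀ t, HasDerivAt a (D22 t * c t) t)
    (hb : ∀ t, HasDerivAt b (D22 t * d t) t)
    (hc : ∀ t, HasDerivAt c (-(D11 t * a t)) t)
    (hd : ∀ t, HasDerivAt d (-(D11 t * b t)) t)
    (hsympl : ∀ t, a t * d t - b t * c t = 1) :
    (∀ t, (a t + d t) ^ 2 + (b t - c t) ^ 2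
        = a t ^ 2 + b t ^ 2 + c t ^ 2 + d t ^ 2 + 2 ∧
      0 < (a t + d t) ^ 2 + (b t - c t) ^ 2) ∧
    (∀ t, (deriv b t - deriv c t) * (a t + d t)
          - (b t - c t) * (deriv a t + deriv d t)
        = D11 t * (a t ^ 2 + b t ^ 2 + 1) + D22 t * (c t ^ 2 + d t ^ 2 + 1) ∧
      0 < D11 t * (a t ^ 2 + b t ^ 2 + 1) + D22 t * (c t ^ 2 + d t ^ 2 + 1)) ∧
    (∀ θ : ℝ → ℝ, Continuous θ →
      (∀ t, ((a t + d t : ℝ) : ℂ) + ((b t - c t : ℝ) : ℂ) * Complex.I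
        = (‖((a t + d t : ℝ) : ℂ) + ((b t - c t : ℝ) : ℂ) * Complex.I‖ : ℂ)
            * Complex.exp ((θ t : ℂ) * Complex.I)) →
      StrictMono θ) := by
  refine ⟨fun t => ⟨?_, ?_⟩, fun t => ⟨?_, ?_⟩, ?_⟩
  · linear_combination 2 * hsympl t
  · nlinarith [hsympl t, sq_nonneg (a t), sq_nonneg (b t), sq_nonneg (c t), sq_nonneg (d t)]
  · rw [(hb t).deriv, (hc t).deriv, (ha t).deriv, (hd t).deriv]
    linear_combination (D11 t + D22 t) * hsympl t
  · have h1 : 0 < D11 t * (a t ^ 2 + b t ^ 2 + 1) := mul_pos (hD11 t) (by positivity)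
    have h2 : 0 < D22 t * (c t ^ 2 + d t ^ 2 + 1) := mul_pos (hD22 t) (by positivity)
    linarith
  · intro θ hθc hcirc
    exact aux_strictMono (fun t => a t + d t) (fun t => b t - c t)
      (fun t => D22 t * c t + -(D11 t * b t)) (fun t => D22 t * d t - -(D11 t * a t))
      (fun t => (ha t).add (hd t)) (fun t => (hb t).sub (hc t))
      (fun t => by
        nlinarith [hsympl t, sq_nonneg (a t), sq_nonneg (b t), sq_nonneg (c t), sq_nonneg (d t)])
      (fun t => by
        have he : (D22 t * d t - -(D11 t * a t)) * (a t + d t)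
            - (b t - c t) * (D22 t * c t + -(D11 t * b t))
            = D11 t * (a t ^ 2 + b t ^ 2 + 1) + D22 t * (c t ^ 2 + d t ^ 2 + 1) := by
          linear_combination (D11 t + D22 t) * hsympl t
        rw [he]
        have h1 : 0 < D11 t * (a t ^ 2 + b t ^ 2 + 1) := mul_pos (hD11 t) (by positivity)
        have h2 : 0 < D22 t * (c t ^ 2 + d t ^ 2 + 1) := mul_pos (hD22 t) (by positivity)
        linarith)
      θ hθc hcirc
end
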